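/- arXiv:1501.03087 — 4 statements merged into one kernel-verified Lean document; each statement's English description precedes it below -/
import Mathlib

section
/- Let n ≥ 2 be an integer and let p be a permutation of {1, …, k}. The set of affine permutations w ∈ S̃_n that avoid p is finite if and only if p avoids the pattern [321], i.e., there are no indices a < b < c in {1, …, k} with p(a) > p(b) > p(c). -/
open scoped BigOperators

/-- An affine permutation of size `n`: a bijection `ℤ → ℤ` with `w(i+n) = w(i)+n`
and `w(1) + ⋯ + w(n) = n(n+1)/2`. -/
structure AffinePerm (n : ℕ) where
  toFun : ℤ → ℤ
  bijective : Function.Bijective toFun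
  shift : ∀ i : ℤ, toFun (i + n) = toFun i + n
  sum_base : 2 * ∑ i ∈ Finset.Icc (1 : ℤ) (n : ℤ), toFun i = n * (n + 1)

namespace AffinePerm

variable {n k : ℕ}

/-- Coxeter length: number of inversions `(i,j)` with `1 ≤ i ≤ n`, `i < j`, `w(i) > w(j)`. -/
noncomputable def len (w : AffinePerm n) : ℕ :=
  Set.ncard {ij : ℤ × ℤ | 1 ≤ ij.1 ∧ ij.1 ≤ (n : ℤ) ∧ ij.1 < ij.2 ∧ w.toFun ij.2 < w.toFun ij.1}

/-- `w` contains the pattern `p`. -/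
def Contains (w : AffinePerm n) (p : Equiv.Perm (Fin k)) : Prop :=
  ∃ f : Fin k → ℤ, StrictMono f ∧ ∀ a b : Fin k, w.toFun (f a) < w.toFun (f b) ↔ p a < p b

/-- Minimal length coset representative: `w(1) < w(2) < ⋯ < w(n)`. -/
def IsMLCR (w : AffinePerm n) : Prop :=
  ∀ i : ℤ, 1 ≤ i → i < (n : ℤ) → w.toFun i < w.toFun (i + 1)

/-- `m` is a bead of the abacus of `w`. -/
def IsBead (w : AffinePerm n) (m : ℤ) : Prop :=
  ∃ j : ℤ, 1 ≤ j ∧ j ≤ (n : ℤ) ∧ ∃ q : ℕ, m = w.toFun j - (q : ℤ) * n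

/-- `i`-th entry of the gap vector: number of gaps strictly between `w(i)` and `w(i+1)`. -/
noncomputable def gapVec (w : AffinePerm n) (i : ℕ) : ℕ :=
  Set.ncard {m : ℤ | w.toFun (i : ℤ) < m ∧ m < w.toFun ((i : ℤ) + 1) ∧ ¬ w.IsBead m}

/-- Minimal abacus condition: `w(j+1) − w(j) ∈ {1, …, n−1}` for `1 ≤ j ≤ n−1`. -/
def IsMinimal (w : AffinePerm n) : Prop :=
  ∀ j : ℤ, 1 ≤ j → j ≤ (n : ℤ) - 1 →
    1 ≤ w.toFun (j + 1) - w.toFun j ∧ w.toFun (j + 1) - w.toFun j ≤ (n : ℤ) - 1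

/-- `π` is the strand assignment of the instance `f` of a pattern in `w`:
`π a = j` where `w (f a)` differs by a multiple of `n` from the `j`-th smallest
base-window value. -/
def IsStrandOf (w : AffinePerm n) (f : Fin k → ℤ) (π : Fin k → ℕ) : Prop :=
  ∀ a : Fin k, ∃ r : ℤ, 1 ≤ r ∧ r ≤ (n : ℤ) ∧
    Set.ncard {s : ℤ | 1 ≤ s ∧ s ≤ (n : ℤ) ∧ w.toFun s ≤ w.toFun r} = π a ∧
    (n : ℤ) ∣ (w.toFun (f a) - w.toFun r)

/-- `w` contains an instance of `p` whose strand assignment is `π`. -/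
def ContainsWithStrand (w : AffinePerm n) (p : Equiv.Perm (Fin k)) (π : Fin k → ℕ) : Prop :=
  ∃ f : Fin k → ℤ, StrictMono f ∧ (∀ a b : Fin k, w.toFun (f a) < w.toFun (f b) ↔ p a < p b) ∧
    w.IsStrandOf f π

end AffinePerm

/-- Periodic extension `ṽ : ℤ → ℤ` of a permutation `v` of `{1,…,n}`
(realized as `Equiv.Perm (Fin n)` via the shift by one). -/
def periodicExt (n : ℕ) (v : Equiv.Perm (Fin n)) (i : ℤ) : ℤ :=
  if h : 0 < n then
    ((v ⟨((i - 1) % (n : ℤ)).toNat, by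
        have hn : (0 : ℤ) < (n : ℤ) := by exact_mod_cast h
        have h1 := Int.emod_nonneg (i - 1) (ne_of_gt hn)
        have h2 := Int.emod_lt_of_pos (i - 1) hn
        omega⟩ : Fin n).1 : ℤ) + 1 + (n : ℤ) * ((i - 1) / (n : ℤ))
  else i

/-- Number of inversions of a finite permutation. -/
def permInv {n : ℕ} (v : Equiv.Perm (Fin n)) : ℕ :=
  (Finset.univ.filter fun ab : Fin n × Fin n => ab.1 < ab.2 ∧ v ab.2 < v ab.1).card

/-- A sequence of naturals is eventually periodic. -/
def EventuallyPeriodic (A : ℕ → ℕ) : Prop :=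
  ∃ N d : ℕ, 0 < d ∧ ∀ m : ℕ, N ≤ m → A (m + d) = A m

/-- `w` is the unique element of `S̃₃^∘` with gap vector `(t₁, 2·t₂)`. -/
def IsW3 (t : ℕ × ℕ) (w : AffinePerm 3) : Prop :=
  w.IsMLCR ∧ w.gapVec 1 = t.1 ∧ w.gapVec 2 = 2 * t.2

/-- `t ∈ S(p, π)`: `w_t` contains an instance of `p` with strand assignment `π`. -/
def MemS {k : ℕ} (p : Equiv.Perm (Fin k)) (π : Fin k → ℕ) (t : ℕ × ℕ) : Prop :=
  ∃ w : AffinePerm 3, IsW3 t w ∧ w.ContainsWithStrand p π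

/-- Two strand-2 indices are linked below. -/
def LinkedBelow {k : ℕ} (p : Equiv.Perm (Fin k)) (π : Fin k → ℕ) (a b : Fin k) : Prop :=
  π a = 2 ∧ π b = 2 ∧ ∃ r : Fin k, π r = 1 ∧ max a b < r ∧ p r < min (p a) (p b)

/-- Two strand-2 indices are linked above. -/
def LinkedAbove {k : ℕ} (p : Equiv.Perm (Fin k)) (π : Fin k → ℕ) (a b : Fin k) : Prop :=
  π a = 2 ∧ π b = 2 ∧ ∃ r : Fin k, π r = 3 ∧ r < min a b ∧ max (p a) (p b) < p r

/-- Chained below: a sequence of strand-2 indices, consecutive pairs linked below. -/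
def ChainedBelow {k : ℕ} (p : Equiv.Perm (Fin k)) (π : Fin k → ℕ) (a b : Fin k) : Prop :=
  Relation.ReflTransGen (LinkedBelow p π) a b

/-- Chained above: a sequence of strand-2 indices, consecutive pairs linked above. -/
def ChainedAbove {k : ℕ} (p : Equiv.Perm (Fin k)) (π : Fin k → ℕ) (a b : Fin k) : Prop :=
  Relation.ReflTransGen (LinkedAbove p π) a b

/-- A corner of `(p, π)`. -/
def PatternCorner {k : ℕ} (p : Equiv.Perm (Fin k)) (π : Fin k → ℕ) (a b r : Fin k) : Prop :=
  π a = 2 ∧ π b = 2 ∧ a ≠ b ∧ (π r = 1 ∨ π r = 3) ∧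
  ((a < r ∧ r < b) ∨ (b < r ∧ r < a)) ∧
  ((p a < p r ∧ p r < p b) ∨ (p b < p r ∧ p r < p a))

/-- `(p, π)` has a tight corner. -/
def HasTightCorner {k : ℕ} (p : Equiv.Perm (Fin k)) (π : Fin k → ℕ) : Prop :=
  ∃ a b r : Fin k, PatternCorner p π a b r ∧ (ChainedBelow p π a b ∨ ChainedAbove p π a b)

/-- `w = u_t ∘ ṽ` where `u_t ∈ S̃ₙ^∘` has gap vector `(i·tᵢ + u̇⁰ᵢ)`. -/
def Represents {n : ℕ} (u0 : AffinePerm n) (v : Equiv.Perm (Fin n)) (t : Fin (n - 1) → ℕ)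
    (w : AffinePerm n) : Prop :=
  ∃ ut : AffinePerm n, ut.IsMLCR ∧
    (∀ i : Fin (n - 1), ut.gapVec (i.1 + 1) = (i.1 + 1) * t i + u0.gapVec (i.1 + 1)) ∧
    ∀ i : ℤ, w.toFun i = ut.toFun (periodicExt n v i)

-- ===================== auxiliary machinery =====================

namespace CritesAux

open AffinePerm

theorem shift_mul {n : ℕ} (w : AffinePerm n) (i : ℤ) :
    ∀ q : ℤ, w.toFun (i + q * n) = w.toFun i + q * n := by
  intro q
  induction q using Int.induction_on with
  | zero => simp
  | succ q ih =>
      have h : i + ((q : ℤ) + 1) * n = (i + q * n) + n := by ring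
      rw [h, w.shift, ih]; ring
  | pred q ih =>
      have h := w.shift (i + (-(q:ℤ) - 1) * n)
      have e1 : i + (-(q:ℤ) - 1) * n + n = i + (-(q:ℤ)) * n := by ring
      rw [e1, ih] at h
      have h2 : w.toFun (i + (-(q:ℤ) - 1) * n) = w.toFun i + (-(q:ℤ)) * n - n := by omega
      rw [h2]; ring

theorem ext_window {n : ℕ} (w1 w2 : AffinePerm n) (hn : 0 < n)
    (h : ∀ i : ℤ, 1 ≤ i → i ≤ (n : ℤ) → w1.toFun i = w2.toFun i) : w1 = w2 := by
  have hfun : w1.toFun = w2.toFun := by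
    funext x
    have hn' : (0:ℤ) < (n:ℤ) := by exact_mod_cast hn
    set r : ℤ := (x - 1) % n + 1 with hr
    set q : ℤ := (x - 1) / n with hq
    have h1 := Int.mul_ediv_add_emod (x-1) n
    have h2 := Int.emod_nonneg (x-1) (by omega : (n:ℤ) ≠ 0)
    have h3 := Int.emod_lt_of_pos (x-1) hn'
    have hc : q * (n:ℤ) = (n:ℤ) * q := mul_comm _ _
    have hx : x = r + q * n := by rw [hr, hq]; rw [hq] at hc; omega
    rw [hx, shift_mul, shift_mul, h r (by omega) (by omega)]
  cases w1; cases w2; simp_all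

theorem gauss (n : ℕ) : 2 * ∑ i ∈ Finset.Icc (1 : ℤ) (n : ℤ), i = n * (n + 1) := by
  induction n with
  | zero => simp
  | succ m ih =>
      have hins : Finset.Icc (1 : ℤ) ((m+1 : ℕ) : ℤ) = insert ((m:ℤ)+1) (Finset.Icc (1:ℤ) (m:ℤ)) := by
        ext x
        simp only [Finset.mem_Icc, Finset.mem_insert]
        push_cast
        omega
      rw [hins, Finset.sum_insert (by simp)]
      push_cast
      push_cast at ih
      ring_nf
      ring_nf at ih
      omega

section hardcomb
variable {k : ℕ}
def PV (p : Equiv.Perm (Fin k)) : ℕ → ℕ := fun e => if h : e < k then ((p ⟨e, h⟩ : Fin k) : ℕ) else 0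

def HN (p : Equiv.Perm (Fin k)) : ℕ → Prop := fun e => ∀ i, i < e → PV p i < PV p e

theorem pv_inj (p : Equiv.Perm (Fin k)) {i j : ℕ} (hi : i < k) (hj : j < k)
    (h : PV p i = PV p j) : i = j := by
  unfold PV at h
  rw [dif_pos hi, dif_pos hj] at h
  have : p ⟨i, hi⟩ = p ⟨j, hj⟩ := Fin.ext h
  have := p.injective this
  exact congrArg Fin.val this

theorem h321N (p : Equiv.Perm (Fin k))
    (h321 : ¬ ∃ a b c : Fin k, a < b ∧ b < c ∧ p c < p b ∧ p b < p a)
    {r i j : ℕ} (h1 : r < i) (h2 : i < j) (h3 : j < k)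
    (hv1 : PV p j < PV p i) (hv2 : PV p i < PV p r) : False := by
  have hik : i < k := by omega
  have hrk : r < k := by omega
  apply h321
  refine ⟨⟨r, hrk⟩, ⟨i, hik⟩, ⟨j, h3⟩, h1, h2, ?_, ?_⟩
  · rw [Fin.lt_def]
    unfold PV at hv1
    rw [dif_pos h3, dif_pos hik] at hv1
    exact hv1
  · rw [Fin.lt_def]
    unfold PV at hv2
    rw [dif_pos hik, dif_pos hrk] at hv2
    exact hv2

theorem f1 (p : Equiv.Perm (Fin k))
    (h321 : ¬ ∃ a b c : Fin k, a < b ∧ b < c ∧ p c < p b ∧ p b < p a)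
    {i j : ℕ} (hij : i < j) (hj : j < k) (hi : ¬ HN p i) : PV p i < PV p j := by
  unfold HN at hi
  push_neg at hi
  obtain ⟨r, hr, hr2⟩ := hi
  have hik : i < k := by omega
  have hrk : r < k := by omega
  have hri : PV p i < PV p r := by
    rcases lt_or_eq_of_le hr2 with h | h
    · exact h
    · exact absurd (pv_inj p hrk hik h.symm) (by omega)
  rcases lt_trichotomy (PV p i) (PV p j) with h | h | h
  · exact h
  · exact absurd (pv_inj p hik hj h) (by omega)
  · exact absurd (h321N p h321 hr hij hj h hri) id

theorem f3 (p : Equiv.Perm (Fin k)) {i j : ℕ} (hi : HN p i) (h : PV p i < PV p j) : i < j := by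
  by_contra hc
  push_neg at hc
  rcases lt_or_eq_of_le hc with h2 | h2
  · exact absurd (hi j h2) (by omega)
  · rw [h2] at h; exact absurd h (lt_irrefl _)

def Gg (k : ℕ) : ℕ → ℤ := fun e => (4:ℤ)^(k-e)
def Bf (k : ℕ) : ℕ → ℤ := fun e => ∑ t ∈ Finset.range (k-e), (4:ℤ)^t

theorem geom3 (m : ℕ) : 3 * (∑ t ∈ Finset.range m, (4:ℤ)^t) + 1 = 4^m := by
  induction m with
  | zero => simp
  | succ m ih => rw [Finset.sum_range_succ]; ring_nf; ring_nf at ih; linarith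

theorem Gg_pos (k e : ℕ) : 1 ≤ Gg k e := one_le_pow₀ (by norm_num)

theorem Bf_nonneg (k e : ℕ) : 0 ≤ Bf k e :=
  Finset.sum_nonneg fun t _ => by positivity

theorem Bf_le (k e : ℕ) : Bf k e ≤ (4:ℤ)^k := by
  have h := geom3 (k - e)
  have h2 : (4:ℤ)^(k-e) ≤ 4^k := pow_le_pow_right₀ (by norm_num) (by omega)
  have h3 := Bf_nonneg k e
  unfold Bf at h3 ⊢
  linarith

theorem Bf_succ (k e : ℕ) (he : e < k) : Bf k e = Bf k (e+1) + Gg k (e+1) := by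
  unfold Bf Gg
  have h : k - e = (k - (e+1)) + 1 := by omega
  rw [h, Finset.sum_range_succ]

theorem Gg_mono (k s j : ℕ) (hsj : s < j) (hjk : j ≤ k) : 4 * Gg k j ≤ Gg k s := by
  unfold Gg
  have : 4 * (4:ℤ)^(k-j) = 4^((k-j)+1) := by rw [pow_succ]; ring
  rw [this]
  exact pow_le_pow_right₀ (by norm_num) (by omega)


theorem exists_y (p : Equiv.Perm (Fin k))
    (h321 : ¬ ∃ a b c : Fin k, a < b ∧ b < c ∧ p c < p b ∧ p b < p a)
    (Q : ℤ) (hQ : (4:ℤ)^k ≤ Q) :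
    ∀ j, j ≤ k → ∃ y : ℕ → ℤ,
      (∀ e, e + 1 < j → y e + Gg k (e+1) ≤ y (e+1)) ∧
      (∀ s t, s < t → t < j → HN p s → ¬ HN p t → PV p s < PV p t → y s + Q + 1 ≤ y t) ∧
      (∀ s e, s ≤ e → e < j → HN p s →
        (∀ t, s < t → t ≤ e → ¬ HN p t → PV p t < PV p s) → y e ≤ y s + Q - Bf k e) := by
  intro j
  induction j with
  | zero =>
      exact fun _ => ⟨fun _ => 0, fun e he => by omega, fun s t h1 h2 => by omega,
        fun s e h1 h2 => by omega⟩
  | succ j ih =>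
    intro hj1
    have hjk : j < k := hj1
    obtain ⟨y, P1, P2, P3⟩ := ih (by omega)
    classical
    have mono : ∀ b, b < j → ∀ a, a ≤ b → y a ≤ y b := by
      intro b
      induction b with
      | zero =>
          intro _ a ha
          have h0 : a = 0 := by omega
          exact le_of_eq (congrArg y h0)
      | succ b ihb =>
        intro hb a ha
        have hstep : y b + Gg k (b+1) ≤ y (b+1) := P1 b hb
        have hg := Gg_pos k (b+1)
        rcases Nat.lt_or_ge a (b+1) with h | h
        · have := ihb (by omega) a (by omega); linarith
        · have : a = b+1 := by omega
          exact le_of_eq (congrArg y this)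
    have gap : ∀ a b, a < b → b < j → y a + Gg k b ≤ y b := by
      intro a b hab hbj
      cases b with
      | zero => omega
      | succ b =>
        have h1 := mono b (by omega) a (by omega)
        have h2 := P1 b hbj
        linarith
    by_cases hj0 : j = 0
    · subst hj0
      refine ⟨fun _ => 0, fun e he => by omega, fun s t h1 h2 => by omega, fun s e h1 h2 _ _ => ?_⟩
      have := Bf_le k e
      linarith
    · set jm := j - 1 with hjmdef
      have hjm : jm + 1 = j := by omega
      set Jset := (Finset.range j).filter (fun s => HN p s ∧ PV p s < PV p j) with hJ
      set NEW : ℤ := (if hLp : (¬ HN p j) ∧ Jset.Nonempty then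
          max (y jm) (y (Jset.max' hLp.2) + Q + 1) + Gg k j
        else y jm + Gg k j) with hNEW
      have hNEWge : y jm + Gg k j ≤ NEW := by
        rw [hNEW]
        by_cases h : (¬ HN p j) ∧ Jset.Nonempty
        · rw [dif_pos h]
          have := le_max_left (y jm) (y (Jset.max' h.2) + Q + 1)
          linarith
        · rw [dif_neg h]
      have hNEWjump : ∀ s, s < j → HN p s → PV p s < PV p j → ¬ HN p j →
          y s + Q + 1 ≤ NEW := by
        intro s hs hHs hPV hnH
        have hmem : s ∈ Jset := by
          rw [hJ]
          simp only [Finset.mem_filter, Finset.mem_range]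
          exact ⟨hs, hHs, hPV⟩
        have hcond : (¬ HN p j) ∧ Jset.Nonempty := ⟨hnH, ⟨s, hmem⟩⟩
        rw [hNEW, dif_pos hcond]
        have h1 : s ≤ Jset.max' hcond.2 := Finset.le_max' _ s hmem
        have hsmmem : Jset.max' hcond.2 ∈ (Finset.range j).filter (fun s => HN p s ∧ PV p s < PV p j) :=
          Jset.max'_mem hcond.2
        simp only [Finset.mem_filter, Finset.mem_range] at hsmmem
        have h2 : y s ≤ y (Jset.max' hcond.2) := mono _ hsmmem.1 s h1
        have h3 := le_max_right (y jm) (y (Jset.max' hcond.2) + Q + 1)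
        have h4 := Gg_pos k j
        linarith
      have hNEWub : ∀ s, s < j → HN p s →
          (∀ t, s < t → t ≤ j → ¬ HN p t → PV p t < PV p s) →
          NEW ≤ y s + Q - Bf k j := by
        intro s hs hHs hcond
        have hP3 : y jm ≤ y s + Q - Bf k jm := by
          rcases Nat.lt_or_ge s jm with h | h
          · exact P3 s jm (by omega) (by omega) hHs
              (fun t h1 h2 h3 => hcond t h1 (by omega) h3)
          · have hsjm : s = jm := by omega
            rw [hsjm]
            have := Bf_le k jm
            linarith
        have hBsucc : Bf k jm = Bf k j + Gg k j := by
          have h := Bf_succ k jm (by omega)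
          rw [hjm] at h
          exact h
        rw [hNEW]
        by_cases hLp : (¬ HN p j) ∧ Jset.Nonempty
        · rw [dif_pos hLp]
          have hsmmem : Jset.max' hLp.2 ∈ (Finset.range j).filter (fun s => HN p s ∧ PV p s < PV p j) :=
            Jset.max'_mem hLp.2
          simp only [Finset.mem_filter, Finset.mem_range] at hsmmem
          obtain ⟨hsm_lt, hsmH, hsmPV⟩ := hsmmem
          have hPVj : PV p j < PV p s := hcond j hs (le_refl j) hLp.1
          have hsm_lt_s : Jset.max' hLp.2 < s := f3 p hsmH (lt_trans hsmPV hPVj)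
          have hgap : y (Jset.max' hLp.2) + Gg k s ≤ y s := gap _ s hsm_lt_s hs
          have hGs : 4 * Gg k j ≤ Gg k s := Gg_mono k s j hs (le_of_lt hjk)
          have hgeom : 3 * Bf k j + 1 = Gg k j := geom3 (k - j)
          have hgpos := Gg_pos k j
          have hb1 : y jm ≤ y s + Q - Bf k j - Gg k j := by linarith
          have hb2 : y (Jset.max' hLp.2) + Q + 1 ≤ y s + Q - Bf k j - Gg k j := by linarith
          have := max_le hb1 hb2
          linarith
        · rw [dif_neg hLp]
          linarith
      refine ⟨fun e => if e < j then y e else NEW, ?_, ?_, ?_⟩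
      · intro e he
        rcases Nat.lt_or_ge (e+1) j with h | h
        · simp only [if_pos h, if_pos (by omega : e < j)]
          exact P1 e h
        · have hej : e + 1 = j := by omega
          have hee : e < j := by omega
          simp only [if_pos hee, if_neg (by omega : ¬ e + 1 < j)]
          have : e = jm := by omega
          rw [this] at *
          rw [hjm]
          exact hNEWge
      · intro s t hst ht hHs hHt hPV
        rcases Nat.lt_or_ge t j with h | h
        · simp only [if_pos h, if_pos (by omega : s < j)]
          exact P2 s t hst h hHs hHt hPV
        · have htj : t = j := by omega
          subst htj
          simp only [if_pos (by omega : s < t), if_neg (lt_irrefl t)]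
          exact hNEWjump s hst hHs hPV hHt
      · intro s e hse he hHs hcond
        rcases Nat.lt_or_ge e j with h | h
        · simp only [if_pos h, if_pos (by omega : s < j)]
          exact P3 s e hse h hHs hcond
        · have hej : e = j := by omega
          subst hej
          rcases Nat.lt_or_ge s e with h2 | h2
          · simp only [if_pos h2, if_neg (lt_irrefl e)]
            exact hNEWub s h2 hHs hcond
          · have hsj : s = e := by omega
            subst hsj
            simp only [if_neg (lt_irrefl s)]
            have := Bf_le k s
            linarith

end hardcomb

section family
variable (n : ℕ) (hn : 2 ≤ n) (m : ℕ)

noncomputable def famF (x : ℤ) : ℤ :=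
  x + (if (n:ℤ) ∣ (x - 1) then (n:ℤ) * (n - 1) * (m + 1) else -(n:ℤ) * (m + 1))

theorem famF_shift (x : ℤ) : famF n m (x + n) = famF n m x + n := by
  unfold famF
  have hd : (n:ℤ) ∣ (x + n - 1) ↔ (n:ℤ) ∣ (x - 1) := by
    constructor
    · intro h; have := Int.dvd_sub h (dvd_refl (n:ℤ)); simpa using (by rw [show x + n - 1 - n = x - 1 by ring] at this; exact this)
    · intro h; have := Int.dvd_add h (dvd_refl (n:ℤ)); rw [show x - 1 + n = x + n - 1 by ring] at this; exact this
  rw [if_congr hd rfl rfl]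
  by_cases h : (n:ℤ) ∣ (x - 1) <;> simp [h] <;> ring

theorem famF_bij : Function.Bijective (famF n m) := by
  classical
  rw [Function.bijective_iff_has_inverse]
  refine ⟨fun y => y - (if (n:ℤ) ∣ (y - 1) then (n:ℤ) * (n - 1) * (m + 1) else -(n:ℤ) * (m + 1)), fun x => ?_, fun y => ?_⟩
  · dsimp only
    unfold famF
    have hA : (n:ℤ) ∣ (n:ℤ) * (n - 1) * (m + 1) := ⟨(n-1)*(m+1), by ring⟩
    have hB : (n:ℤ) ∣ -(n:ℤ) * (m + 1) := ⟨-(m+1), by ring⟩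
    by_cases h : (n:ℤ) ∣ (x - 1)
    · rw [if_pos h]
      have h2 : (n:ℤ) ∣ (x + (n:ℤ) * (n - 1) * (m + 1) - 1) := by
        rw [show x + (n:ℤ)*(n-1)*(m+1) - 1 = (x-1) + (n:ℤ)*(n-1)*(m+1) by ring]
        exact Int.dvd_add h hA
      rw [if_pos h2]; ring
    · rw [if_neg h]
      have h2 : ¬ (n:ℤ) ∣ (x + -(n:ℤ) * (m + 1) - 1) := by
        intro hc
        apply h
        have := Int.dvd_sub hc hB
        rw [show x + -(n:ℤ)*(m+1) - 1 - (-(n:ℤ)*(m+1)) = x - 1 by ring] at this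
        exact this
      rw [if_neg h2]; ring
  · dsimp only
    unfold famF
    have hA : (n:ℤ) ∣ (n:ℤ) * (n - 1) * (m + 1) := ⟨(n-1)*(m+1), by ring⟩
    have hB : (n:ℤ) ∣ -(n:ℤ) * (m + 1) := ⟨-(m+1), by ring⟩
    by_cases h : (n:ℤ) ∣ (y - 1)
    · rw [if_pos h]
      have h2 : (n:ℤ) ∣ (y - (n:ℤ) * (n - 1) * (m + 1) - 1) := by
        rw [show y - (n:ℤ)*(n-1)*(m+1) - 1 = (y-1) - (n:ℤ)*(n-1)*(m+1) by ring]
        exact Int.dvd_sub h hA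
      rw [if_pos h2]; ring
    · rw [if_neg h]
      have h2 : ¬ (n:ℤ) ∣ (y - -(n:ℤ) * (m + 1) - 1) := by
        intro hc
        apply h
        have := Int.dvd_add hc hB
        rw [show y - -(n:ℤ)*(m+1) - 1 + (-(n:ℤ)*(m+1)) = y - 1 by ring] at this
        exact this
      rw [if_neg h2]; ring

theorem famF_sum (hn2 : 2 ≤ n) :
    2 * ∑ i ∈ Finset.Icc (1 : ℤ) (n : ℤ), famF n m i = n * (n + 1) := by
  classical
  have hfil : Finset.filter (fun i : ℤ => (n:ℤ) ∣ (i - 1)) (Finset.Icc (1:ℤ) (n:ℤ)) = {1} := by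
    ext i
    simp only [Finset.mem_filter, Finset.mem_Icc, Finset.mem_singleton]
    constructor
    · rintro ⟨⟨h1, h2⟩, c, hc⟩
      have hn' : (0:ℤ) < (n:ℤ) := by exact_mod_cast (by omega : 0 < n)
      rcases lt_trichotomy c 0 with h | h | h
      · nlinarith
      · subst h; simp at hc; omega
      · nlinarith
    · rintro rfl
      exact ⟨⟨le_refl _, by exact_mod_cast (by omega : 1 ≤ n)⟩, 0, by ring⟩
  set A : ℤ := (n:ℤ) * (n - 1) * (m + 1) with hA
  set B : ℤ := -(n:ℤ) * (m + 1) with hB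
  have hsplit : ∑ i ∈ Finset.Icc (1 : ℤ) (n : ℤ), famF n m i
      = (∑ i ∈ Finset.Icc (1 : ℤ) (n : ℤ), i)
        + ((∑ i ∈ Finset.Icc (1 : ℤ) (n : ℤ), (B : ℤ))
          + ∑ i ∈ Finset.Icc (1 : ℤ) (n : ℤ), (if (n:ℤ) ∣ (i - 1) then A - B else 0)) := by
    unfold famF
    rw [← Finset.sum_add_distrib, ← Finset.sum_add_distrib]
    apply Finset.sum_congr rfl
    intro i _
    by_cases h : (n:ℤ) ∣ (i - 1) <;> simp [h, hA, hB] <;> ring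
  have hcard : (Finset.Icc (1:ℤ) (n:ℤ)).card = n := by
    rw [Int.card_Icc]
    simp
  have hite : ∑ i ∈ Finset.Icc (1 : ℤ) (n : ℤ), (if (n:ℤ) ∣ (i - 1) then A - B else 0) = A - B := by
    rw [← Finset.sum_filter, hfil, Finset.sum_singleton]
  rw [hsplit, hite, Finset.sum_const, hcard]
  simp only [nsmul_eq_mul]
  have hg := gauss n
  have hnz : (1:ℤ) ≤ (n:ℤ) := by exact_mod_cast (by omega : 1 ≤ n)
  rw [hA, hB]
  ring_nf
  ring_nf at hg
  nlinarith [hg]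
end family

noncomputable def famW (n m : ℕ) (hn : 2 ≤ n) : AffinePerm n :=
  ⟨famF n m, famF_bij n m, famF_shift n m, famF_sum n m hn⟩

theorem famF_key (n m : ℕ) (hn : 2 ≤ n) (i j : ℤ) (hij : i < j)
    (hv : famF n m j < famF n m i) : ((n:ℤ) ∣ (i-1)) ∧ ¬((n:ℤ) ∣ (j-1)) := by
  have hn' : (2:ℤ) ≤ (n:ℤ) := by exact_mod_cast hn
  have hm : (1:ℤ) ≤ (m:ℤ) + 1 := by omega
  have hA : (0:ℤ) < (n:ℤ) * ((n:ℤ) - 1) * ((m:ℤ) + 1) := by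
    apply mul_pos (mul_pos (by linarith) (by linarith)) (by linarith)
  have hB : -(n:ℤ) * ((m:ℤ) + 1) < 0 := by nlinarith [mul_pos (show (0:ℤ) < (n:ℤ) by linarith) (show (0:ℤ) < (m:ℤ)+1 by linarith)]
  unfold famF at hv
  by_cases h1 : (n:ℤ) ∣ (i-1) <;> by_cases h2 : (n:ℤ) ∣ (j-1) <;>
    simp only [h1, h2, if_pos, if_neg, if_true, if_false] at hv
  · linarith
  · exact ⟨h1, h2⟩
  · linarith
  · linarith

theorem famW_avoids {n m k : ℕ} (hn : 2 ≤ n) (p : Equiv.Perm (Fin k))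
    (h : ∃ a b c : Fin k, a < b ∧ b < c ∧ p c < p b ∧ p b < p a) :
    ¬ (famW n m hn).Contains p := by
  rintro ⟨f, hmono, hiff⟩
  obtain ⟨a, b, c, hab, hbc, h1, h2⟩ := h
  have hba : famF n m (f b) < famF n m (f a) := (hiff b a).mpr h2
  have hcb : famF n m (f c) < famF n m (f b) := (hiff c b).mpr h1
  have k1 := famF_key n m hn (f a) (f b) (hmono hab) hba
  have k2 := famF_key n m hn (f b) (f c) (hmono hbc) hcb
  exact k1.2 k2.1

theorem inf_avoiders {n k : ℕ} (hn : 2 ≤ n) (p : Equiv.Perm (Fin k))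
    (h : ∃ a b c : Fin k, a < b ∧ b < c ∧ p c < p b ∧ p b < p a) :
    ¬ ({w : AffinePerm n | ¬ w.Contains p}.Finite) := by
  intro hfin
  have hinj : Function.Injective (fun m : ℕ => famW n m hn) := by
    intro m1 m2 he
    have h1 : famF n m1 1 = famF n m2 1 := by
      have := congrArg AffinePerm.toFun he
      exact congrFun this 1
    unfold famF at h1
    rw [if_pos (by simp), if_pos (by simp)] at h1
    have hn' : (2:ℤ) ≤ (n:ℤ) := by exact_mod_cast hn
    have : (m1 : ℤ) = (m2 : ℤ) := by
      have hpos : (0:ℤ) < (n:ℤ) * ((n:ℤ) - 1) := by nlinarith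
      nlinarith
    exact_mod_cast this
  have hmem : ∀ m : ℕ, famW n m hn ∈ {w : AffinePerm n | ¬ w.Contains p} := by
    intro m
    exact famW_avoids hn p h
  exact (Set.infinite_of_injective_forall_mem hinj hmem) hfin

section assemble
variable {n k : ℕ}

theorem contains_of_gap (hn : 2 ≤ n) (p : Equiv.Perm (Fin k))
    (h321 : ¬ ∃ a b c : Fin k, a < b ∧ b < c ∧ p c < p b ∧ p b < p a)
    (w : AffinePerm n) (i₀ j₀ : ℤ)
    (hi1 : 1 ≤ i₀) (hi2 : i₀ ≤ (n:ℤ)) (hj1 : 1 ≤ j₀) (hj2 : j₀ ≤ (n:ℤ))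
    (hgap : (n:ℤ) * 4^k + n ≤ (w.toFun i₀ - i₀) - (w.toFun j₀ - j₀)) :
    w.Contains p := by
  classical
  have hn' : (0:ℤ) < (n:ℤ) := by exact_mod_cast (by omega : 0 < n)
  set W : ℤ := w.toFun i₀ - w.toFun j₀ with hWdef
  have hW : (n:ℤ) * 4^k + 1 ≤ W := by
    rw [hWdef]; linarith
  set Q : ℤ := W / n with hQdef
  have hdm := Int.mul_ediv_add_emod W n
  have hm1 := Int.emod_nonneg W (by omega : (n:ℤ) ≠ 0)
  have hm2 := Int.emod_lt_of_pos W hn'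
  have hQ1 : (n:ℤ) * Q ≤ W := by rw [hQdef]; omega
  have hQ2 : W < (n:ℤ) * (Q + 1) := by
    have : (n:ℤ) * (Q+1) = n * Q + n := by ring
    rw [this, hQdef]; omega
  have hQ : (4:ℤ)^k ≤ Q := by
    have hlt : (n:ℤ) * (4^k - 1) < n * Q := by
      have h1 : (n:ℤ) * (4^k - 1) = n * 4^k - n := by ring
      rw [hQdef]
      omega
    have := (mul_lt_mul_iff_right₀ hn').mp hlt
    linarith
  obtain ⟨y, P1, P2, P3⟩ := exists_y p h321 Q hQ k (le_refl k)
  have ygap : ∀ a b : ℕ, a < b → b < k → y a + Gg k b ≤ y b := by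
    have mono : ∀ b, b < k → ∀ a, a ≤ b → y a ≤ y b := by
      intro b
      induction b with
      | zero =>
          intro _ a ha
          have h0 : a = 0 := by omega
          exact le_of_eq (congrArg y h0)
      | succ b ihb =>
        intro hb a ha
        have hstep : y b + Gg k (b+1) ≤ y (b+1) := P1 b hb
        have hg := Gg_pos k (b+1)
        rcases Nat.lt_or_ge a (b+1) with h | h
        · have := ihb (by omega) a (by omega); linarith
        · have h0 : a = b+1 := by omega
          exact le_of_eq (congrArg y h0)
    intro a b hab hbk
    cases b with
    | zero => omega
    | succ b =>
      have h1 := mono b (by omega) a (by omega)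
      have h2 := P1 b hbk
      linarith
  set f : Fin k → ℤ := fun a => (if HN p a.1 then i₀ else j₀) + n * y a.1 with hfdef
  have hfmono : StrictMono f := by
    intro a b hab
    have hab' : a.1 < b.1 := hab
    have hy : y a.1 + 1 ≤ y b.1 := by
      have := ygap a.1 b.1 hab' b.2
      have := Gg_pos k b.1
      linarith
    have hmul : (n:ℤ) * (y a.1 + 1) ≤ n * y b.1 := by
      apply mul_le_mul_of_nonneg_left hy (by linarith)
    rw [hfdef]
    simp only
    by_cases h1 : HN p a.1 <;> by_cases h2 : HN p b.1 <;>
      simp only [h1, h2, if_true, if_false] <;>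
      · have hn2 : (2:ℤ) ≤ (n:ℤ) := by exact_mod_cast hn
        nlinarith
  have hval : ∀ a : Fin k, w.toFun (f a)
      = (if HN p a.1 then w.toFun i₀ else w.toFun j₀) + n * y a.1 := by
    intro a
    simp only [hfdef]
    by_cases h : HN p a.1
    · simp only [h, if_true]
      rw [mul_comm ((n:ℤ)) (y a.1)]
      exact shift_mul w i₀ (y a.1)
    · simp only [h, if_false]
      rw [mul_comm ((n:ℤ)) (y a.1)]
      exact shift_mul w j₀ (y a.1)
  have hpv : ∀ a b : Fin k, p a < p b → PV p a.1 < PV p b.1 := by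
    intro a b h
    unfold PV
    rw [dif_pos a.2, dif_pos b.2]
    simpa using h
  have hyn : ∀ a b : Fin k, a.1 < b.1 → (n:ℤ) * y a.1 + n ≤ n * y b.1 := by
    intro a b h
    have hy : y a.1 + 1 ≤ y b.1 := by
      have := ygap a.1 b.1 h b.2
      have := Gg_pos k b.1
      linarith
    have := mul_le_mul_of_nonneg_left hy (by linarith : (0:ℤ) ≤ (n:ℤ))
    linarith [this]
  have KEY : ∀ a b : Fin k, p a < p b → w.toFun (f a) < w.toFun (f b) := by
    intro a b hab
    have hpab := hpv a b hab
    rw [hval a, hval b]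
    by_cases hHa : HN p a.1 <;> by_cases hHb : HN p b.1
    · -- both H
      have hlt : a.1 < b.1 := f3 p hHa hpab
      simp only [hHa, hHb, if_true]
      have := hyn a b hlt
      linarith
    · -- a ∈ H, b ∈ L
      simp only [hHa, hHb, if_true, if_false]
      rcases lt_trichotomy a.1 b.1 with h | h | h
      · have hP2 := P2 a.1 b.1 h b.2 hHa hHb hpab
        have hmul : (n:ℤ) * (y a.1 + Q + 1) ≤ n * y b.1 :=
          mul_le_mul_of_nonneg_left hP2 (by linarith)
        have : (n:ℤ) * (y a.1 + Q + 1) = n * y a.1 + n * (Q + 1) := by ring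
        rw [hWdef] at hQ2
        linarith [hmul, hQ2]
      · exfalso; rw [h] at hHa; exact hHb hHa
      · exfalso
        have := hHa b.1 h
        omega
    · -- a ∈ L, b ∈ H
      simp only [hHa, hHb, if_true, if_false]
      rcases lt_trichotomy a.1 b.1 with h | h | h
      · have := hyn a b h
        rw [hWdef] at hW
        have h4 : (0:ℤ) < 4^k := by positivity
        nlinarith
      · exfalso; rw [h] at hHa; exact hHa hHb
      · -- b before a : upper bound case
        have hP3 : y a.1 ≤ y b.1 + Q - Bf k a.1 := by
          apply P3 b.1 a.1 (le_of_lt h) a.2 hHb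
          intro t ht1 ht2 htL
          rcases Nat.lt_or_ge t a.1 with h2 | h2
          · have hf1 : PV p t < PV p a.1 := f1 p h321 h2 a.2 htL
            omega
          · have ht : t = a.1 := by omega
            rw [ht]
            exact hpab
        have hBf := Bf_nonneg k a.1
        have hyle : y a.1 ≤ y b.1 + Q := by linarith
        have hmul : (n:ℤ) * y a.1 ≤ n * (y b.1 + Q) :=
          mul_le_mul_of_nonneg_left hyle (by linarith)
        have hle : w.toFun j₀ + (n:ℤ) * y a.1 ≤ w.toFun i₀ + n * y b.1 := by
          have : (n:ℤ) * (y b.1 + Q) = n * y b.1 + n * Q := by ring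
          rw [hWdef] at hQ1
          linarith
        rcases lt_or_eq_of_le hle with h3 | h3
        · exact h3
        · exfalso
          have heq : w.toFun (f a) = w.toFun (f b) := by
            rw [hval a, hval b]
            simp only [hHa, hHb, if_true, if_false]
            linarith
          have := w.bijective.1 heq
          have hfl : f b < f a := hfmono (show b < a from h)
          omega
    · -- both L
      simp only [hHa, hHb, if_false]
      rcases lt_trichotomy a.1 b.1 with h | h | h
      · have := hyn a b h
        linarith
      · exfalso
        have : a = b := Fin.ext h
        rw [this] at hab
        exact lt_irrefl _ hab
      · exfalso
        have := f1 p h321 h a.2 hHb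
        omega
  refine ⟨f, hfmono, fun a b => ⟨?_, KEY a b⟩⟩
  intro hv
  rcases lt_trichotomy (p a) (p b) with h | h | h
  · exact h
  · exfalso
    have : a = b := p.injective (Fin.ext (congrArg Fin.val h))
    rw [this] at hv
    exact lt_irrefl _ hv
  · exfalso
    have := KEY b a h
    omega

theorem finite_avoiders (hn : 2 ≤ n) (p : Equiv.Perm (Fin k))
    (h321 : ¬ ∃ a b c : Fin k, a < b ∧ b < c ∧ p c < p b ∧ p b < p a) :
    {w : AffinePerm n | ¬ w.Contains p}.Finite := by
  classical
  set D : ℤ := (n:ℤ) * 4^k + n with hD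
  have hD0 : 0 < D := by
    have : (0:ℤ) < (n:ℤ) := by exact_mod_cast (by omega : 0 < n)
    have h4 : (0:ℤ) < 4^k := by positivity
    nlinarith
  -- every avoider has bounded window displacements
  have hbound : ∀ w : AffinePerm n, ¬ w.Contains p →
      ∀ i : ℤ, 1 ≤ i → i ≤ (n:ℤ) → |w.toFun i - i| ≤ D := by
    intro w hw i hi1 hi2
    have hsum0 : ∑ i ∈ Finset.Icc (1:ℤ) (n:ℤ), (w.toFun i - i) = 0 := by
      have h1 := w.sum_base
      have h2 := gauss n
      rw [Finset.sum_sub_distrib]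
      linarith
    have hne : (Finset.Icc (1:ℤ) (n:ℤ)).Nonempty := by
      refine ⟨1, ?_⟩
      simp only [Finset.mem_Icc]
      exact ⟨le_refl _, by exact_mod_cast (by omega : 1 ≤ n)⟩
    have hpos : ∃ j ∈ Finset.Icc (1:ℤ) (n:ℤ), 0 ≤ w.toFun j - j := by
      by_contra hc
      push_neg at hc
      have : ∑ i ∈ Finset.Icc (1:ℤ) (n:ℤ), (w.toFun i - i) < ∑ i ∈ Finset.Icc (1:ℤ) (n:ℤ), (0:ℤ) := by
        apply Finset.sum_lt_sum_of_nonempty hne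
        intro j hj
        exact hc j hj
      rw [Finset.sum_const, Finset.sum_sub_distrib] at this
      rw [Finset.sum_sub_distrib] at hsum0
      simp at this
      linarith
    have hneg : ∃ j ∈ Finset.Icc (1:ℤ) (n:ℤ), w.toFun j - j ≤ 0 := by
      by_contra hc
      push_neg at hc
      have : ∑ i ∈ Finset.Icc (1:ℤ) (n:ℤ), (0:ℤ) < ∑ i ∈ Finset.Icc (1:ℤ) (n:ℤ), (w.toFun i - i) := by
        apply Finset.sum_lt_sum_of_nonempty hne
        intro j hj
        exact hc j hj
      rw [Finset.sum_const, Finset.sum_sub_distrib] at this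
      rw [Finset.sum_sub_distrib] at hsum0
      simp at this
      linarith
    have hub : ∀ i₀ j₀ : ℤ, 1 ≤ i₀ → i₀ ≤ (n:ℤ) → 1 ≤ j₀ → j₀ ≤ (n:ℤ) →
        (w.toFun i₀ - i₀) - (w.toFun j₀ - j₀) < D := by
      intro i₀ j₀ a1 a2 b1 b2
      by_contra hc
      push_neg at hc
      rw [hD] at hc
      exact hw (contains_of_gap hn p h321 w i₀ j₀ a1 a2 b1 b2 hc)
    obtain ⟨jp, hjp, hjp2⟩ := hpos
    obtain ⟨jn, hjn, hjn2⟩ := hneg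
    simp only [Finset.mem_Icc] at hjp hjn
    have h1 := hub i jn hi1 hi2 hjn.1 hjn.2
    have h2 := hub jp i hjp.1 hjp.2 hi1 hi2
    rw [abs_le]
    constructor <;> linarith
  -- the set of window-bounded affine permutations is finite
  set S : Set (AffinePerm n) := {w : AffinePerm n | ∀ i : ℤ, 1 ≤ i → i ≤ (n:ℤ) → |w.toFun i - i| ≤ D} with hS
  have hfin : S.Finite := by
    haveI : Finite ↥S := by
      apply Finite.of_injective
        (fun (w : ↥S) => fun (i : Fin n) =>
          (⟨w.1.toFun ((i.1 : ℤ) + 1), by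
            have hiub : i.1 < n := i.2
            have hb := w.2 ((i.1 : ℤ) + 1) (by omega) (by omega)
            rw [abs_le] at hb
            simp only [Finset.mem_Icc]
            constructor <;> linarith [hb.1, hb.2]⟩ :
            {x : ℤ // x ∈ Finset.Icc (1 - D) ((n:ℤ) + D)}))
      intro w1 w2 heq
      apply Subtype.ext
      apply ext_window w1.1 w2.1 (by omega)
      intro i hi1 hi2
      have hsub : ((i - 1).toNat) < n := by omega
      have hfi := congrFun heq ⟨(i-1).toNat, hsub⟩
      have hval2 := congrArg Subtype.val hfi
      simp only at hval2
      have hcast : (((i-1).toNat : ℤ) + 1) = i := by omega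
      rw [hcast] at hval2
      exact hval2
    exact S.toFinite
  apply hfin.subset
  intro w hw
  exact hbound w hw

end assemble

end CritesAux

/-- Crites' theorem: the set of `p`-avoiding affine permutations is finite
iff `p` avoids `[321]`. -/
theorem stmt1 (n : ℕ) (hn : 2 ≤ n) (k : ℕ) (p : Equiv.Perm (Fin k)) :
    {w : AffinePerm n | ¬ w.Contains p}.Finite ↔
      ¬ ∃ a b c : Fin k, a < b ∧ b < c ∧ p c < p b ∧ p b < p a := by
  constructor
  · intro hfin
    by_contra hex
    exact CritesAux.inf_avoiders hn p hex hfin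
  · intro h321
    exact CritesAux.finite_avoiders hn p h321
end

section
/- For every integer n ≥ 2 and every w ∈ S̃_n^∘, the Coxeter length of w satisfies ℓ(w) = ∑_{i=1}^{n−1} (n − i)·ẇ_i, where ẇ is the gap vector of w. -/
open scoped BigOperators

section Stmt2Aux

variable {n : ℕ}

/-- Shift by any integer multiple of `n`. -/
lemma AffinePerm.shift_mul (w : AffinePerm n) (q i : ℤ) :
    w.toFun (i + q * n) = w.toFun i + q * n := by
  induction q using Int.induction_on with
  | zero => simp
  | succ q ih =>
      have h1 : i + ((q : ℤ) + 1) * n = (i + q * n) + n := by ring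
      rw [h1, w.shift, ih]; ring
  | pred q ih =>
      have h1 : i + (-(q : ℤ) - 1) * n = (i + (-(q : ℤ)) * n) - n := by ring
      have h2 := w.shift ((i + (-(q : ℤ)) * n) - n)
      rw [sub_add_cancel] at h2
      rw [h1]
      have := ih
      linarith

/-- Strict monotonicity inside the base window. -/
lemma AffinePerm.mlcr_strictMono (w : AffinePerm n) (hw : w.IsMLCR) :
    ∀ i j : ℤ, 1 ≤ i → i < j → j ≤ (n : ℤ) → w.toFun i < w.toFun j := by
  intro i j h1 h2 h3
  have H : ∀ j : ℤ, i + 1 ≤ j → j ≤ (n : ℤ) → w.toFun i < w.toFun j := by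
    intro j hj
    refine Int.le_induction
      (motive := fun j _ => j ≤ (n : ℤ) → w.toFun i < w.toFun j) ?_ ?_ j hj
    · intro h; exact hw i h1 (by omega)
    · intro j hj ih h
      exact lt_trans (ih (by omega)) (hw j (by omega) (by omega))
  exact H j (by omega) h3

lemma AffinePerm.mlcr_mono (w : AffinePerm n) (hw : w.IsMLCR) :
    ∀ i j : ℤ, 1 ≤ i → i ≤ j → j ≤ (n : ℤ) → w.toFun i ≤ w.toFun j := by
  intro i j h1 h2 h3
  rcases eq_or_lt_of_le h2 with h | h
  · rw [h]
  · exact le_of_lt (w.mlcr_strictMono hw i j h1 h h3)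

/-- Lower bound on values. -/
lemma AffinePerm.lower (w : AffinePerm n) (hw : w.IsMLCR) (hn : 2 ≤ n) (j : ℤ) :
    w.toFun 1 + (j - n) ≤ w.toFun j := by
  have hn0 : (0 : ℤ) < n := by exact_mod_cast lt_of_lt_of_le two_pos hn
  set q := (j - 1) / (n : ℤ) with hq
  set r := (j - 1) % (n : ℤ) with hr
  have hr0 : 0 ≤ r := Int.emod_nonneg _ (ne_of_gt hn0)
  have hrn : r < n := Int.emod_lt_of_pos _ hn0
  have h := Int.mul_ediv_add_emod (j - 1) (n : ℤ)
  have hj : j = (r + 1) + q * n := by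
    have hc : q * (n : ℤ) = (n : ℤ) * q := mul_comm _ _
    rw [← hq, ← hr] at h
    linarith
  have h2 : w.toFun j = w.toFun (r + 1) + q * n := by
    conv_lhs => rw [hj]
    exact w.shift_mul q (r + 1)
  have h3 : w.toFun 1 ≤ w.toFun (r + 1) :=
    w.mlcr_mono hw 1 (r + 1) le_rfl (by omega) (by omega)
  have h4 : j - n ≤ q * n := by
    have hc : q * (n : ℤ) = (n : ℤ) * q := mul_comm _ _
    rw [← hq, ← hr] at h
    linarith
  linarith

/-- Bead characterization: `m` is a bead iff it has a preimage `≤ n`. -/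
lemma AffinePerm.isBead_iff (w : AffinePerm n) (hn : 2 ≤ n) (m : ℤ) :
    w.IsBead m ↔ ∃ j : ℤ, j ≤ (n : ℤ) ∧ w.toFun j = m := by
  have hn0 : (0 : ℤ) < n := by exact_mod_cast lt_of_lt_of_le two_pos hn
  constructor
  · rintro ⟨j, h1, h2, q, hm⟩
    refine ⟨j - (q : ℤ) * n, ?_, ?_⟩
    · have : (0 : ℤ) ≤ (q : ℤ) * n := by positivity
      omega
    · have := w.shift_mul (-(q : ℤ)) j
      have he : j + -(q : ℤ) * n = j - (q : ℤ) * n := by ring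
      rw [he] at this
      rw [this, hm]; ring
  · rintro ⟨j, hj, hwj⟩
    set q := ((n : ℤ) - j) / (n : ℤ) with hqdef
    have h := Int.mul_ediv_add_emod ((n : ℤ) - j) (n : ℤ)
    have hr0 : 0 ≤ ((n : ℤ) - j) % (n : ℤ) := Int.emod_nonneg _ (ne_of_gt hn0)
    have hrn : ((n : ℤ) - j) % (n : ℤ) < n := Int.emod_lt_of_pos _ hn0
    have hq0 : 0 ≤ q := Int.ediv_nonneg (by omega) (le_of_lt hn0)
    have hkey : j + q * n = (n : ℤ) - ((n : ℤ) - j) % (n : ℤ) := by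
      have hc : q * (n : ℤ) = (n : ℤ) * q := mul_comm _ _
      rw [← hqdef] at h
      linarith
    refine ⟨j + q * n, by omega, by omega, q.toNat, ?_⟩
    have hs := w.shift_mul q j
    rw [hs, hwj]
    have : ((q.toNat : ℤ)) = q := Int.toNat_of_nonneg hq0
    rw [this]; ring

/-- Gap characterization. -/
lemma AffinePerm.not_isBead_iff (w : AffinePerm n) (hn : 2 ≤ n) (m : ℤ) :
    ¬ w.IsBead m ↔ ∀ j : ℤ, w.toFun j = m → (n : ℤ) < j := by
  rw [w.isBead_iff hn]
  push_neg
  constructor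
  · intro h j hj
    by_contra hc
    exact absurd hj (h j (by omega))
  · intro h j hj
    intro he
    exact absurd (h j he) (by omega)

/-- Gaps below a window value form a finite set. -/
lemma AffinePerm.gapsBelow_finite (w : AffinePerm n) (hw : w.IsMLCR) (hn : 2 ≤ n) (c : ℤ) :
    {m : ℤ | ¬ w.IsBead m ∧ m < w.toFun c}.Finite := by
  apply Set.Finite.subset (Set.finite_Ioo (w.toFun 1) (w.toFun c))
  rintro m ⟨hg, hm⟩
  refine ⟨?_, hm⟩
  obtain ⟨j, hj⟩ := w.bijective.2 m
  have hjn : (n : ℤ) < j := (w.not_isBead_iff hn m).1 hg j hj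
  have := w.lower hw hn j
  omega

/-- Count of gaps below `w (d+1)`. -/
lemma AffinePerm.gapsBelow_card (w : AffinePerm n) (hw : w.IsMLCR) (hn : 2 ≤ n) :
    ∀ d : ℕ, d ≤ n - 1 →
      {m : ℤ | ¬ w.IsBead m ∧ m < w.toFun ((d : ℤ) + 1)}.ncard
        = ∑ i ∈ Finset.Icc 1 d, w.gapVec i := by
  intro d
  induction d with
  | zero =>
      intro _
      have he : {m : ℤ | ¬ w.IsBead m ∧ m < w.toFun ((0 : ℤ) + 1)} = ∅ := by
        ext m
        simp only [Set.mem_setOf_eq, Set.mem_empty_iff_false, iff_false, not_and]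
        intro hg hm
        obtain ⟨j, hj⟩ := w.bijective.2 m
        have hjn : (n : ℤ) < j := (w.not_isBead_iff hn m).1 hg j hj
        have := w.lower hw hn j
        rw [zero_add] at hm
        omega
      simp only [Nat.cast_zero]
      rw [he]
      simp
  | succ d ih =>
      intro hd
      have hd' : d ≤ n - 1 := by omega
      have hdn : (d : ℤ) + 1 < (n : ℤ) := by
        have : d + 1 ≤ n - 1 := hd
        omega
      have hcast : (((d : ℕ) + 1 : ℕ) : ℤ) = (d : ℤ) + 1 := by push_cast; ring
      set B := {m : ℤ | ¬ w.IsBead m ∧ m < w.toFun ((d : ℤ) + 1)} with hB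
      set I := {m : ℤ | w.toFun (((d : ℕ) + 1 : ℕ) : ℤ) < m
          ∧ m < w.toFun ((((d : ℕ) + 1 : ℕ) : ℤ) + 1) ∧ ¬ w.IsBead m} with hI
      have hbead : w.IsBead (w.toFun ((d : ℤ) + 1)) :=
        (w.isBead_iff hn _).2 ⟨(d : ℤ) + 1, by omega, rfl⟩
      have hsplit : {m : ℤ | ¬ w.IsBead m ∧ m < w.toFun ((((d : ℕ) + 1 : ℕ) : ℤ) + 1)}
          = B ∪ I := by
        ext m
        simp only [hB, hI, hcast, Set.mem_setOf_eq, Set.mem_union]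
        constructor
        · rintro ⟨hg, hm⟩
          rcases lt_trichotomy m (w.toFun ((d : ℤ) + 1)) with h | h | h
          · exact Or.inl ⟨hg, h⟩
          · exact absurd (h ▸ hbead) hg
          · exact Or.inr ⟨h, hm, hg⟩
        · rintro (⟨hg, hm⟩ | ⟨h1, h2, hg⟩)
          · refine ⟨hg, lt_trans hm ?_⟩
            exact hw ((d : ℤ) + 1) (by omega) (by omega)
          · exact ⟨hg, h2⟩
      have hdisj : Disjoint B I := by
        rw [Set.disjoint_left]
        rintro m ⟨_, hm⟩ ⟨h1, _, _⟩
        rw [hcast] at h1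
        omega
      have hBfin : B.Finite := w.gapsBelow_finite hw hn _
      have hIfin : I.Finite := by
        apply Set.Finite.subset
          (Set.finite_Ioo (w.toFun (((d : ℕ) + 1 : ℕ) : ℤ))
            (w.toFun ((((d : ℕ) + 1 : ℕ) : ℤ) + 1)))
        rintro m ⟨h1, h2, _⟩
        exact ⟨h1, h2⟩
      have hgv : w.gapVec (d + 1) = I.ncard := rfl
      rw [hsplit, Set.ncard_union_eq hdisj hBfin hIfin, ih hd', ← hgv,
        Finset.sum_Icc_succ_top (by omega : 1 ≤ d + 1)]

/-- Finiteness of a dependent product set. -/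
lemma finite_depProd (s : Finset ℤ) (F : ℤ → Set ℤ) (hF : ∀ k ∈ s, (F k).Finite) :
    {p : ℤ × ℤ | p.1 ∈ s ∧ p.2 ∈ F p.1}.Finite := by
  apply Set.Finite.subset
    (Set.Finite.biUnion s.finite_toSet
      (fun k hk => Set.Finite.prod (Set.finite_singleton k) (hF k hk)))
  rintro ⟨x, y⟩ ⟨h1, h2⟩
  exact Set.mem_biUnion h1 ⟨rfl, h2⟩

/-- Cardinality of a dependent product set. -/
lemma ncard_depProd (s : Finset ℤ) (F : ℤ → Set ℤ) :
    (∀ k ∈ s, (F k).Finite) →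
    {p : ℤ × ℤ | p.1 ∈ s ∧ p.2 ∈ F p.1}.ncard = ∑ k ∈ s, (F k).ncard := by
  classical
  induction s using Finset.cons_induction with
  | empty =>
      intro _
      have he : {p : ℤ × ℤ | p.1 ∈ (∅ : Finset ℤ) ∧ p.2 ∈ F p.1} = ∅ := by
        ext p; simp
      rw [he]; simp
  | cons a s ha ih =>
      intro hF
      have hsplit : {p : ℤ × ℤ | p.1 ∈ Finset.cons a s ha ∧ p.2 ∈ F p.1}
          = (({a} : Set ℤ) ×ˢ F a) ∪ {p : ℤ × ℤ | p.1 ∈ s ∧ p.2 ∈ F p.1} := by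
        ext ⟨x, y⟩
        simp only [Finset.mem_cons, Set.mem_setOf_eq, Set.mem_union, Set.mem_prod,
          Set.mem_singleton_iff]
        constructor
        · rintro ⟨h1 | h1, h2⟩
          · exact Or.inl ⟨h1, h1 ▸ h2⟩
          · exact Or.inr ⟨h1, h2⟩
        · rintro (⟨h1, h2⟩ | ⟨h1, h2⟩)
          · exact ⟨Or.inl h1, h1 ▸ h2⟩
          · exact ⟨Or.inr h1, h2⟩
      have hdisj : Disjoint (({a} : Set ℤ) ×ˢ F a) {p : ℤ × ℤ | p.1 ∈ s ∧ p.2 ∈ F p.1} := by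
        rw [Set.disjoint_left]
        rintro ⟨x, y⟩ ⟨h1, _⟩ ⟨h2, _⟩
        simp only [Set.mem_singleton_iff] at h1
        exact ha (h1 ▸ h2)
      have hfin1 : (({a} : Set ℤ) ×ˢ F a).Finite :=
        Set.Finite.prod (Set.finite_singleton a) (hF a (Finset.mem_cons_self a s))
      have hfin2 : {p : ℤ × ℤ | p.1 ∈ s ∧ p.2 ∈ F p.1}.Finite :=
        finite_depProd s F (fun k hk => hF k (Finset.mem_cons_of_mem hk))
      rw [hsplit, Set.ncard_union_eq hdisj hfin1 hfin2,
        ih (fun k hk => hF k (Finset.mem_cons_of_mem hk)), Finset.sum_cons]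
      congr 1
      rw [Set.singleton_prod, Set.ncard_image_of_injective _ (Prod.mk_right_injective a)]

/-- The triangular double-sum identity. -/
lemma sum_tri (a : ℕ → ℕ) : ∀ n : ℕ,
    ∑ k ∈ Finset.Icc 1 n, ∑ i ∈ Finset.Icc 1 (k - 1), a i
      = ∑ i ∈ Finset.Icc 1 (n - 1), (n - i) * a i := by
  intro n
  induction n with
  | zero => simp
  | succ n ih =>
      have h1 : ∑ i ∈ Finset.Icc 1 n, ((n + 1) - i) * a i
          = (∑ i ∈ Finset.Icc 1 n, (n - i) * a i) + ∑ i ∈ Finset.Icc 1 n, a i := by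
        rw [← Finset.sum_add_distrib]
        apply Finset.sum_congr rfl
        intro i hi
        simp only [Finset.mem_Icc] at hi
        have hni : (n + 1) - i = (n - i) + 1 := by omega
        rw [hni]; ring
      have h2 : ∑ i ∈ Finset.Icc 1 n, (n - i) * a i
          = ∑ i ∈ Finset.Icc 1 (n - 1), (n - i) * a i := by
        refine (Finset.sum_subset (Finset.Icc_subset_Icc le_rfl (by omega)) ?_).symm
        intro i hi hni
        simp only [Finset.mem_Icc] at hi hni
        have hz : n - i = 0 := by omega
        rw [hz, zero_mul]
      rw [Finset.sum_Icc_succ_top (by omega : 1 ≤ n + 1), ih]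
      simp only [Nat.add_sub_cancel]
      rw [h1, h2]

end Stmt2Aux

/-- Coxeter length from the gap vector. -/
theorem stmt2 (n : ℕ) (hn : 2 ≤ n) (w : AffinePerm n) (hw : w.IsMLCR) :
    w.len = ∑ i ∈ Finset.Icc 1 (n - 1), (n - i) * w.gapVec i := by
  classical
  set F : ℤ → Set ℤ := fun k => {m : ℤ | ¬ w.IsBead m ∧ m < w.toFun k} with hF
  have hFfin : ∀ k ∈ Finset.Icc (1 : ℤ) (n : ℤ), (F k).Finite :=
    fun k _ => w.gapsBelow_finite hw hn k
  -- Step 1: the inversion set only involves j > n.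
  have hInv : {ij : ℤ × ℤ | 1 ≤ ij.1 ∧ ij.1 ≤ (n : ℤ) ∧ ij.1 < ij.2
        ∧ w.toFun ij.2 < w.toFun ij.1}
      = {ij : ℤ × ℤ | 1 ≤ ij.1 ∧ ij.1 ≤ (n : ℤ) ∧ (n : ℤ) < ij.2
        ∧ w.toFun ij.2 < w.toFun ij.1} := by
    ext ⟨i, j⟩
    simp only [Set.mem_setOf_eq]
    constructor
    · rintro ⟨h1, h2, h3, h4⟩
      refine ⟨h1, h2, ?_, h4⟩
      by_contra hc
      exact absurd h4 (not_lt_of_gt (w.mlcr_strictMono hw i j h1 h3 (by omega)))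
    · rintro ⟨h1, h2, h3, h4⟩
      exact ⟨h1, h2, by omega, h4⟩
  -- Step 2: image under (k, j) ↦ (k, w j).
  have hg : Function.Injective (fun p : ℤ × ℤ => (p.1, w.toFun p.2)) := by
    rintro ⟨a, b⟩ ⟨c, d⟩ h
    simp only [Prod.mk.injEq] at h
    exact Prod.ext h.1 (w.bijective.1 h.2)
  have hImage : (fun p : ℤ × ℤ => (p.1, w.toFun p.2)) ''
        {ij : ℤ × ℤ | 1 ≤ ij.1 ∧ ij.1 ≤ (n : ℤ) ∧ (n : ℤ) < ij.2
          ∧ w.toFun ij.2 < w.toFun ij.1}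
      = {p : ℤ × ℤ | p.1 ∈ Finset.Icc (1 : ℤ) (n : ℤ) ∧ p.2 ∈ F p.1} := by
    ext ⟨k, m⟩
    simp only [Set.mem_image, Set.mem_setOf_eq, Prod.mk.injEq, Finset.mem_Icc, hF]
    constructor
    · rintro ⟨⟨k', j⟩, ⟨h1, h2, h3, h4⟩, heq⟩
      simp only [Prod.mk.injEq] at heq
      obtain ⟨hk, hm⟩ := heq
      subst hk; subst hm
      refine ⟨⟨h1, h2⟩, ?_, h4⟩
      rw [w.not_isBead_iff hn]
      intro j' hj'
      have := w.bijective.1 hj'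
      omega
    · rintro ⟨⟨h1, h2⟩, hgap, hm⟩
      obtain ⟨j, hj⟩ := w.bijective.2 m
      have hjn : (n : ℤ) < j := (w.not_isBead_iff hn m).1 hgap j hj
      exact ⟨(k, j), ⟨h1, h2, hjn, by rw [hj]; exact hm⟩, by simp [hj]⟩
  -- Step 3: compute.
  have hlen : w.len = ∑ k ∈ Finset.Icc (1 : ℤ) (n : ℤ), (F k).ncard := by
    rw [AffinePerm.len, hInv,
      ← Set.ncard_image_of_injective _ hg, hImage, ncard_depProd _ _ hFfin]
  -- Step 4: reindex the outer sum over ℕ.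
  have hmap : Finset.Icc (1 : ℤ) (n : ℤ)
      = (Finset.Icc 1 n).map ⟨(Nat.cast : ℕ → ℤ), Nat.cast_injective⟩ := by
    ext x
    simp only [Finset.mem_Icc, Finset.mem_map, Function.Embedding.coeFn_mk]
    constructor
    · rintro ⟨h1, h2⟩
      exact ⟨x.toNat, ⟨by omega, by omega⟩, by omega⟩
    · rintro ⟨a, ⟨ha1, ha2⟩, rfl⟩
      exact ⟨by exact_mod_cast ha1, by exact_mod_cast ha2⟩
  rw [hlen, hmap, Finset.sum_map]
  have hterm : ∀ k ∈ Finset.Icc 1 n,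
      (F ((⟨(Nat.cast : ℕ → ℤ), Nat.cast_injective⟩ : ℕ ↪ ℤ) k)).ncard
        = ∑ i ∈ Finset.Icc 1 (k - 1), w.gapVec i := by
    intro k hk
    simp only [Finset.mem_Icc] at hk
    have hd : k - 1 ≤ n - 1 := by omega
    have := w.gapsBelow_card hw hn (k - 1) hd
    have hc : (((k - 1 : ℕ) : ℤ) + 1) = (k : ℤ) := by
      have : k = (k - 1) + 1 := by omega
      rw [this]; push_cast; ring
    rw [hc] at this
    simpa [hF] using this
  rw [Finset.sum_congr rfl hterm, sum_tri]
end

section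
/- For every integer n ≥ 2, the map sending w ∈ S̃_n^∘ to its gap vector ẇ is a bijection from S̃_n^∘ onto ℕ^{n−1}. -/
open scoped BigOperators

namespace GapBij
variable {n : ℕ}

/-- `y` is the greatest integer `< c` with residue in `S`. -/
def IsPrev (n : ℕ) (S : Finset (ZMod n)) (c y : ℤ) : Prop :=
  y < c ∧ ((y : ZMod n) ∈ S) ∧ ∀ x : ℤ, y < x → x < c → ((x : ZMod n) ∉ S)

lemma isPrev_unique {S : Finset (ZMod n)} {c y y' : ℤ}
    (h : IsPrev n S c y) (h' : IsPrev n S c y') : y = y' := by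
  by_contra hne
  rcases lt_or_gt_of_ne hne with hlt | hlt
  · exact h.2.2 y' hlt h'.1 h'.2.1 |>.elim
  · exact h'.2.2 y hlt h.1 h.2.1 |>.elim

lemma exists_res_Ico (hn : 0 < n) (c : ℤ) (r : ZMod n) :
    ∃ x : ℤ, c - n ≤ x ∧ x < c ∧ (x : ZMod n) = r := by
  haveI : NeZero n := ⟨hn.ne'⟩
  refine ⟨c - 1 - (((c - 1 : ℤ) : ZMod n) - r).val, ?_, ?_, ?_⟩
  · have := ZMod.val_lt (((c - 1 : ℤ) : ZMod n) - r)
    omega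
  · have : (0:ℤ) ≤ (((c - 1 : ℤ) : ZMod n) - r).val := Int.natCast_nonneg _
    omega
  · push_cast
    rw [ZMod.natCast_val, ZMod.cast_id]
    ring

lemma exists_isPrev (hn : 0 < n) {S : Finset (ZMod n)} (hS : S.Nonempty) (c : ℤ) :
    ∃ y, IsPrev n S c y := by
  obtain ⟨r, hr⟩ := hS
  classical
  set T := (Finset.Ico (c - (n:ℤ)) c).filter (fun x : ℤ => ((x : ZMod n) ∈ S)) with hT
  obtain ⟨x0, h1, h2, h3⟩ := exists_res_Ico hn c r
  have hx0 : x0 ∈ T := by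
    simp only [hT, Finset.mem_filter, Finset.mem_Ico]
    exact ⟨⟨h1, h2⟩, h3 ▸ hr⟩
  have hTne : T.Nonempty := ⟨x0, hx0⟩
  have hymax : ∀ x ∈ T, x ≤ T.max' hTne := fun x hx => T.le_max' x hx
  have hy' := T.max'_mem hTne
  set Y := T.max' hTne with hY
  simp only [hT, Finset.mem_filter, Finset.mem_Ico] at hy'
  refine ⟨Y, hy'.1.2, hy'.2, ?_⟩
  intro x hx hxc hxS
  have hxT : x ∈ T := by
    simp only [hT, Finset.mem_filter, Finset.mem_Ico]
    refine ⟨⟨?_, hxc⟩, hxS⟩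
    have := hy'.1.1
    omega
  have := hymax x hxT
  omega

/-- The greatest integer `< c` with residue in `S` (junk value if `S = ∅` or `n = 0`). -/
noncomputable def prevInt (n : ℕ) (S : Finset (ZMod n)) (c : ℤ) : ℤ :=
  open Classical in
  if h : ∃ y, IsPrev n S c y then h.choose else c - 1

lemma prevInt_spec (hn : 0 < n) {S : Finset (ZMod n)} (hS : S.Nonempty) (c : ℤ) :
    IsPrev n S c (prevInt n S c) := by
  have h := exists_isPrev hn hS c
  rw [prevInt, dif_pos h]
  exact h.choose_spec


lemma prevInt_lt (hn : 0 < n) {S : Finset (ZMod n)} (hS : S.Nonempty) (c : ℤ) :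
    prevInt n S c < c := (prevInt_spec hn hS c).1

lemma prevInt_iterate_lt (hn : 0 < n) {S : Finset (ZMod n)} (hS : S.Nonempty) (c : ℤ)
    {k : ℕ} (hk : 0 < k) : (prevInt n S)^[k] c < c := by
  induction k with
  | zero => omega
  | succ m ih =>
    rw [Function.iterate_succ_apply']
    rcases Nat.eq_zero_or_pos m with hm | hm
    · subst hm; simpa using prevInt_lt hn hS c
    · exact (prevInt_lt hn hS _).trans (ih hm)

lemma prevInt_iterate_mem (hn : 0 < n) {S : Finset (ZMod n)} (hS : S.Nonempty) (c : ℤ)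
    {k : ℕ} (hk : 0 < k) : (((prevInt n S)^[k] c : ℤ) : ZMod n) ∈ S := by
  obtain ⟨m, rfl⟩ : ∃ m, k = m + 1 := ⟨k - 1, by omega⟩
  rw [Function.iterate_succ_apply']
  exact (prevInt_spec hn hS _).2.1

/-- number of `S`-residue integers strictly between the `(k+1)`-st previous and `c` is `k`. -/
lemma count_iterate (hn : 0 < n) {S : Finset (ZMod n)} (hS : S.Nonempty) [DecidablePred (fun x : ℤ => (x : ZMod n) ∈ S)] :
    ∀ (k : ℕ) (c : ℤ),
    ((Finset.Ioo ((prevInt n S)^[k+1] c) c).filter (fun x : ℤ => (x : ZMod n) ∈ S)).card = k := by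
  intro k
  induction k with
  | zero =>
    intro c
    rw [Finset.card_eq_zero, Finset.filter_eq_empty_iff]
    intro x hx
    rw [Finset.mem_Ioo, Function.iterate_one] at hx
    exact (prevInt_spec hn hS c).2.2 x hx.1 hx.2
  | succ m ih =>
    intro c
    have hpc : prevInt n S c < c := prevInt_lt hn hS c
    have hip : (prevInt n S)^[m+1+1] c = (prevInt n S)^[m+1] (prevInt n S c) :=
      Function.iterate_succ_apply _ _ _
    have hlt : (prevInt n S)^[m+1] (prevInt n S c) < prevInt n S c :=
      prevInt_iterate_lt hn hS _ (by omega)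
    have hsplit : (Finset.Ioo ((prevInt n S)^[m+1+1] c) c).filter (fun x : ℤ => (x : ZMod n) ∈ S)
        = insert (prevInt n S c)
          ((Finset.Ioo ((prevInt n S)^[m+1] (prevInt n S c)) (prevInt n S c)).filter
            (fun x : ℤ => (x : ZMod n) ∈ S)) := by
      ext x
      simp only [Finset.mem_filter, Finset.mem_Ioo, Finset.mem_insert, hip]
      constructor
      · rintro ⟨⟨h1, h2⟩, h3⟩
        rcases lt_trichotomy x (prevInt n S c) with h | h | h
        · exact Or.inr ⟨⟨h1, h⟩, h3⟩
        · exact Or.inl h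
        · exact absurd h3 ((prevInt_spec hn hS c).2.2 x h h2)
      · rintro (rfl | ⟨⟨h1, h2⟩, h3⟩)
        · exact ⟨⟨hlt, hpc⟩, (prevInt_spec hn hS c).2.1⟩
        · exact ⟨⟨h1, h2.trans hpc⟩, h3⟩
    rw [hsplit, Finset.card_insert_of_notMem, ih]
    simp only [Finset.mem_filter, Finset.mem_Ioo]
    rintro ⟨⟨-, h⟩, -⟩
    exact lt_irrefl _ h

/-- uniqueness: an `S`-residue integer `y < c` with exactly `k` `S`-residue integers
between it and `c` is the `(k+1)`-st previous. -/
lemma eq_iterate_of_count (hn : 0 < n) {S : Finset (ZMod n)} (hS : S.Nonempty)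
    [DecidablePred (fun x : ℤ => (x : ZMod n) ∈ S)] :
    ∀ (k : ℕ) (c y : ℤ), y < c → ((y : ZMod n) ∈ S) →
    ((Finset.Ioo y c).filter (fun x : ℤ => (x : ZMod n) ∈ S)).card = k →
    y = (prevInt n S)^[k+1] c := by
  intro k
  induction k with
  | zero =>
    intro c y hyc hyS hcard
    rw [Function.iterate_one]
    have hle : y ≤ prevInt n S c := by
      by_contra h
      exact (prevInt_spec hn hS c).2.2 y (by omega) hyc hyS
    rcases eq_or_lt_of_le hle with h | h
    · exact h
    · exfalso
      have : prevInt n S c ∈ (Finset.Ioo y c).filter (fun x : ℤ => (x : ZMod n) ∈ S) := by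
        simp only [Finset.mem_filter, Finset.mem_Ioo]
        exact ⟨⟨h, prevInt_lt hn hS c⟩, (prevInt_spec hn hS c).2.1⟩
      rw [Finset.card_eq_zero] at hcard
      simp [hcard] at this
  | succ m ih =>
    intro c y hyc hyS hcard
    have hpc := prevInt_lt hn hS c
    have hyp : y < prevInt n S c := by
      have hle : y ≤ prevInt n S c := by
        by_contra h
        exact (prevInt_spec hn hS c).2.2 y (by omega) hyc hyS
      rcases eq_or_lt_of_le hle with h | h
      · exfalso
        have : ((Finset.Ioo y c).filter (fun x : ℤ => (x : ZMod n) ∈ S)).card = 0 := by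
          rw [Finset.card_eq_zero, Finset.filter_eq_empty_iff]
          intro x hx
          rw [Finset.mem_Ioo] at hx
          exact (prevInt_spec hn hS c).2.2 x (h ▸ hx.1) hx.2
        omega
      · exact h
    have hsplit : (Finset.Ioo y c).filter (fun x : ℤ => (x : ZMod n) ∈ S)
        = insert (prevInt n S c)
          ((Finset.Ioo y (prevInt n S c)).filter (fun x : ℤ => (x : ZMod n) ∈ S)) := by
      ext x
      simp only [Finset.mem_filter, Finset.mem_Ioo, Finset.mem_insert]
      constructor
      · rintro ⟨⟨h1, h2⟩, h3⟩
        rcases lt_trichotomy x (prevInt n S c) with h | h | h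
        · exact Or.inr ⟨⟨h1, h⟩, h3⟩
        · exact Or.inl h
        · exact absurd h3 ((prevInt_spec hn hS c).2.2 x h h2)
      · rintro (rfl | ⟨⟨h1, h2⟩, h3⟩)
        · exact ⟨⟨hyp, hpc⟩, (prevInt_spec hn hS c).2.1⟩
        · exact ⟨⟨h1, h2.trans hpc⟩, h3⟩
    rw [hsplit, Finset.card_insert_of_notMem] at hcard
    · have := ih (prevInt n S c) y hyp hyS (by omega)
      rw [this, ← Function.iterate_succ_apply]
    · simp only [Finset.mem_filter, Finset.mem_Ioo]
      rintro ⟨⟨-, h⟩, -⟩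
      exact lt_irrefl _ h

/-- translation equivariance of `prevInt`. -/
lemma prevInt_add (hn : 0 < n) {S : Finset (ZMod n)} (hS : S.Nonempty) (c d : ℤ) :
    prevInt n (S.image (· + (d : ZMod n))) (c + d) = prevInt n S c + d := by
  have hS' : (S.image (· + (d : ZMod n))).Nonempty := hS.image _
  apply isPrev_unique (prevInt_spec hn hS' (c + d))
  have h := prevInt_spec hn hS c
  refine ⟨by have := h.1; omega, ?_, ?_⟩
  · rw [Int.cast_add]
    exact Finset.mem_image_of_mem _ h.2.1
  · intro x hx1 hx2 hxS
    simp only [Finset.mem_image] at hxS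
    obtain ⟨s, hs, hsx⟩ := hxS
    refine h.2.2 (x - d) (by omega) (by omega) ?_
    have : ((x - d : ℤ) : ZMod n) = s := by
      push_cast
      rw [← hsx]; ring
    exact this ▸ hs

lemma prevInt_iterate_add (hn : 0 < n) {S : Finset (ZMod n)} (hS : S.Nonempty) (c d : ℤ) (k : ℕ) :
    (prevInt n (S.image (· + (d : ZMod n))))^[k] (c + d) = (prevInt n S)^[k] c + d := by
  induction k generalizing c with
  | zero => simp
  | succ m ih =>
    rw [Function.iterate_succ_apply, Function.iterate_succ_apply, prevInt_add hn hS c d, ih]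

/-! ### window lemmas for affine permutations -/

lemma shift_int (w : AffinePerm n) (i : ℤ) (q : ℤ) :
    w.toFun (i + q * n) = w.toFun i + q * n := by
  induction q using Int.induction_on with
  | zero => simp
  | succ k ih =>
    have e : i + ((k:ℤ)+1)*n = (i + (k:ℤ)*n) + n := by ring
    rw [e, w.shift, ih]; ring
  | pred k ih =>
    have e : i + (-(k:ℤ)-1)*n + n = i + (-(k:ℤ))*n := by ring
    have h := w.shift (i + (-(k:ℤ)-1)*n)
    rw [e, ih] at h
    linarith

lemma window_mono (w : AffinePerm n) (hM : w.IsMLCR) {j k : ℤ}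
    (h1 : 1 ≤ j) (hjk : j < k) (hk : k ≤ n) : w.toFun j < w.toFun k := by
  have key : ∀ d : ℕ, (j + 1 + (d:ℤ) ≤ (n:ℤ)) → w.toFun j < w.toFun (j + 1 + (d:ℤ)) := by
    intro d
    induction d with
    | zero => intro h; simpa using hM j h1 (by omega)
    | succ p ih =>
      intro h
      push_cast at h ⊢
      have h2 : w.toFun (j+1+(p:ℤ)) < w.toFun (j+1+(p:ℤ)+1) := hM _ (by omega) (by omega)
      have h3 := ih (by omega)
      have e : j+1+((p:ℤ)+1) = j+1+(p:ℤ)+1 := by ring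
      rw [e]
      linarith
  have hd := key (k - j - 1).toNat (by omega)
  have e : j + 1 + ((k - j - 1).toNat : ℤ) = k := by omega
  rwa [e] at hd

lemma res_inj (hn : 0 < n) (w : AffinePerm n) {j k : ℤ}
    (hj1 : 1 ≤ j) (hjn : j ≤ n) (hk1 : 1 ≤ k) (hkn : k ≤ n)
    (h : ((w.toFun j : ZMod n)) = (w.toFun k : ZMod n)) : j = k := by
  have hdvd : (n:ℤ) ∣ w.toFun j - w.toFun k :=
    Int.ModEq.dvd ((ZMod.intCast_eq_intCast_iff _ _ _).mp h).symm
  obtain ⟨q, hq⟩ := hdvd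
  have hwj : w.toFun j = w.toFun (k + q * n) := by
    rw [shift_int w k q]; linarith
  have hjk : j = k + q * n := w.bijective.1 hwj
  have hq0 : q * (n:ℤ) = 0 := by
    rcases lt_trichotomy q 0 with hs | hs | hs
    · have : q * (n:ℤ) ≤ (-1) * n := mul_le_mul_of_nonneg_right (by omega) (by omega)
      omega
    · simp [hs]
    · have : (1:ℤ) * n ≤ q * n := mul_le_mul_of_nonneg_right (by omega) (by omega)
      omega
  omega

lemma res_image_univ' [NeZero n] (hn : 0 < n) {F : ℤ → ZMod n}
    (hinj : ∀ j k : ℤ, 1 ≤ j → j ≤ n → 1 ≤ k → k ≤ n → F j = F k → j = k) :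
    (Finset.Icc (1:ℤ) (n:ℤ)).image F = Finset.univ := by
  apply Finset.eq_univ_of_card
  rw [Finset.card_image_of_injOn (fun a ha b hb hab => by
    rw [Finset.mem_coe, Finset.mem_Icc] at ha hb
    exact hinj a b ha.1 ha.2 hb.1 hb.2 hab)]
  rw [Int.card_Icc]
  simp [ZMod.card]

lemma res_cover' (hn : 0 < n) {F : ℤ → ZMod n}
    (hinj : ∀ j k : ℤ, 1 ≤ j → j ≤ n → 1 ≤ k → k ≤ n → F j = F k → j = k) (r : ZMod n) :
    ∃ j : ℤ, 1 ≤ j ∧ j ≤ n ∧ F j = r := by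
  haveI : NeZero n := ⟨hn.ne'⟩
  have := res_image_univ' hn hinj
  have hr : r ∈ (Finset.Icc (1:ℤ) (n:ℤ)).image F := by rw [this]; exact Finset.mem_univ r
  obtain ⟨j, hj, hjr⟩ := Finset.mem_image.mp hr
  rw [Finset.mem_Icc] at hj
  exact ⟨j, hj.1, hj.2, hjr⟩

lemma res_cover (hn : 0 < n) (w : AffinePerm n) (r : ZMod n) :
    ∃ j : ℤ, 1 ≤ j ∧ j ≤ n ∧ (w.toFun j : ZMod n) = r :=
  res_cover' hn (fun j k hj1 hjn hk1 hkn h => res_inj hn w hj1 hjn hk1 hkn h) r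

lemma isBead_iff (hn : 0 < n) (w : AffinePerm n) (m : ℤ) :
    w.IsBead m ↔ ∃ j : ℤ, 1 ≤ j ∧ j ≤ n ∧ (m : ZMod n) = (w.toFun j : ZMod n) ∧ m ≤ w.toFun j := by
  constructor
  · rintro ⟨j, h1, h2, q, rfl⟩
    have hq0 : (0:ℤ) ≤ (q:ℤ) * n := by positivity
    refine ⟨j, h1, h2, ?_, by omega⟩
    push_cast
    simp [ZMod.natCast_self]
  · rintro ⟨j, h1, h2, hres, hle⟩
    have hdvd : (n:ℤ) ∣ w.toFun j - m :=
      Int.ModEq.dvd ((ZMod.intCast_eq_intCast_iff _ _ _).mp hres)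
    obtain ⟨q, hq⟩ := hdvd
    rw [mul_comm] at hq
    have hq0 : 0 ≤ q := by
      rcases le_or_gt 0 q with h | h
      · exact h
      · exfalso
        have : q * (n:ℤ) ≤ (-1) * n := mul_le_mul_of_nonneg_right (by omega) (by omega)
        omega
    refine ⟨j, h1, h2, q.toNat, ?_⟩
    have : ((q.toNat : ℕ) : ℤ) = q := Int.toNat_of_nonneg hq0
    rw [this]
    omega

lemma notBead_iff (hn : 0 < n) (w : AffinePerm n) (hM : w.IsMLCR) {i : ℕ}
    (hi1 : 1 ≤ i) (hi2 : i + 1 ≤ n) {m : ℤ}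
    (hm1 : w.toFun (i:ℤ) < m) (hm2 : m < w.toFun ((i:ℤ) + 1)) :
    (¬ w.IsBead m) ↔ ∃ j : ℤ, 1 ≤ j ∧ j ≤ (i:ℤ) ∧ (m : ZMod n) = (w.toFun j : ZMod n) := by
  obtain ⟨j₀, hj₀1, hj₀n, hj₀r⟩ := res_cover hn w (m : ZMod n)
  rcases le_or_gt j₀ (i:ℤ) with hcase | hcase
  · -- j₀ ≤ i : m is a gap
    have hwj₀ : w.toFun j₀ ≤ w.toFun (i:ℤ) := by
      rcases eq_or_lt_of_le hcase with h | h
      · rw [h]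
      · exact le_of_lt (window_mono w hM hj₀1 h (by omega))
    constructor
    · intro _; exact ⟨j₀, hj₀1, hcase, hj₀r.symm⟩
    · intro _ hbead
      obtain ⟨j, h1, h2, hres, hle⟩ := (isBead_iff hn w m).mp hbead
      have : j = j₀ := res_inj hn w h1 h2 hj₀1 hj₀n (by rw [← hres, hj₀r])
      subst this
      omega
  · -- j₀ ≥ i + 1 : m is a bead
    have hwj₀ : w.toFun ((i:ℤ)+1) ≤ w.toFun j₀ := by
      rcases eq_or_lt_of_le (show (i:ℤ)+1 ≤ j₀ by omega) with h | h
      · rw [← h]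
      · exact le_of_lt (window_mono w hM (by omega) (by omega) hj₀n)
    have hbead : w.IsBead m := (isBead_iff hn w m).mpr ⟨j₀, hj₀1, hj₀n, hj₀r.symm, by omega⟩
    constructor
    · intro h; exact absurd hbead h
    · rintro ⟨j, h1, h2, hres⟩
      exfalso
      have : j = j₀ := res_inj hn w h1 (by omega) hj₀1 hj₀n (by rw [← hres, hj₀r])
      omega

/-- residue set of the lower window. -/
noncomputable def lowRes (w : AffinePerm n) (i : ℕ) : Finset (ZMod n) :=
  (Finset.Icc (1:ℤ) (i:ℤ)).image (fun j => (w.toFun j : ZMod n))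

lemma lowRes_nonempty (w : AffinePerm n) {i : ℕ} (hi1 : 1 ≤ i) : (lowRes w i).Nonempty :=
  ⟨(w.toFun 1 : ZMod n), Finset.mem_image.mpr ⟨1, Finset.mem_Icc.mpr ⟨le_refl _, by exact_mod_cast hi1⟩, rfl⟩⟩

lemma gapVec_eq_card (hn : 0 < n) (w : AffinePerm n) (hM : w.IsMLCR) {i : ℕ}
    (hi1 : 1 ≤ i) (hi2 : i + 1 ≤ n) :
    w.gapVec i = ((Finset.Ioo (w.toFun (i:ℤ)) (w.toFun ((i:ℤ)+1))).filter
      (fun m : ℤ => (m : ZMod n) ∈ lowRes w i)).card := by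
  rw [AffinePerm.gapVec]
  have hset : {m : ℤ | w.toFun (i:ℤ) < m ∧ m < w.toFun ((i:ℤ)+1) ∧ ¬ w.IsBead m}
      = ↑((Finset.Ioo (w.toFun (i:ℤ)) (w.toFun ((i:ℤ)+1))).filter
        (fun m : ℤ => (m : ZMod n) ∈ lowRes w i)) := by
    ext m
    rw [Set.mem_setOf_eq, Finset.mem_coe, Finset.mem_filter, Finset.mem_Ioo]
    simp only [lowRes, Finset.mem_image, Finset.mem_Icc]
    constructor
    · rintro ⟨h1, h2, h3⟩
      obtain ⟨j, hj1, hj2, hj3⟩ := (notBead_iff hn w hM hi1 hi2 h1 h2).mp h3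
      exact ⟨⟨h1, h2⟩, j, ⟨hj1, hj2⟩, hj3.symm⟩
    · rintro ⟨⟨h1, h2⟩, j, ⟨hj1, hj2⟩, hj3⟩
      exact ⟨h1, h2, (notBead_iff hn w hM hi1 hi2 h1 h2).mpr ⟨j, hj1, hj2, hj3.symm⟩⟩
  rw [hset, Set.ncard_coe_finset]

lemma window_eq_iterate (hn : 0 < n) (w : AffinePerm n) (hM : w.IsMLCR) {i : ℕ}
    (hi1 : 1 ≤ i) (hi2 : i + 1 ≤ n) :
    w.toFun (i:ℤ) = (prevInt n (lowRes w i))^[w.gapVec i + 1] (w.toFun ((i:ℤ)+1)) := by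
  apply eq_iterate_of_count hn (lowRes_nonempty w hi1)
  · exact hM (i:ℤ) (by exact_mod_cast hi1) (by push_cast; omega)
  · exact Finset.mem_image.mpr ⟨(i:ℤ), Finset.mem_Icc.mpr ⟨by exact_mod_cast hi1, le_refl _⟩, rfl⟩
  · exact (gapVec_eq_card hn w hM hi1 hi2).symm

lemma lowRes_eq_compl [NeZero n] (hn : 0 < n) (w : AffinePerm n) {i : ℕ}
    (hi1 : 1 ≤ i) (hi2 : i + 1 ≤ n) :
    lowRes w i = Finset.univ \ ((Finset.Icc ((i:ℤ)+1) (n:ℤ)).image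
      (fun j => (w.toFun j : ZMod n))) := by
  ext r
  simp only [lowRes, Finset.mem_sdiff, Finset.mem_univ, true_and, Finset.mem_image,
    Finset.mem_Icc]
  constructor
  · rintro ⟨j, ⟨hj1, hj2⟩, rfl⟩
    rintro ⟨k, ⟨hk1, hk2⟩, he⟩
    have : k = j := res_inj hn w (by omega) hk2 hj1 (by omega) he
    omega
  · intro hnot
    obtain ⟨j, hj1, hjn, hjr⟩ := res_cover hn w r
    refine ⟨j, ⟨hj1, ?_⟩, hjr⟩
    by_contra h
    exact hnot ⟨j, ⟨by omega, hjn⟩, hjr⟩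

lemma affinePerm_ext {w w' : AffinePerm n} (h : w.toFun = w'.toFun) : w = w' := by
  cases w with
  | mk f hb hs hsum =>
    cases w' with
    | mk f' hb' hs' hsum' =>
      simp only at h
      subst h
      rfl

lemma gapvec_injective (hn2 : 2 ≤ n) {w w' : AffinePerm n} (hM : w.IsMLCR) (hM' : w'.IsMLCR)
    (hg : ∀ i : ℕ, 1 ≤ i → i ≤ n - 1 → w.gapVec i = w'.gapVec i) : w = w' := by
  have hn : 0 < n := by omega
  haveI : NeZero n := ⟨by omega⟩
  set d := w'.toFun (n:ℤ) - w.toFun (n:ℤ) with hd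
  have key : ∀ t : ℕ, t ≤ n - 1 →
      ∀ j : ℤ, (n:ℤ) - t ≤ j → j ≤ (n:ℤ) → w'.toFun j = w.toFun j + d := by
    intro t
    induction t with
    | zero =>
      intro _ j hj1 hj2
      have hj : j = (n:ℤ) := by push_cast at hj1; omega
      subst hj
      omega
    | succ s ih =>
      intro hs j hj1 hj2
      rcases le_or_gt ((n:ℤ) - s) j with hcase | hcase
      · exact ih (by omega) j hcase hj2
      · -- j = n - s - 1
        have hji : j = (n:ℤ) - s - 1 := by push_cast at hj1 ⊢; omega
        set i : ℕ := n - 1 - s with hi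
        have hiz : (i:ℤ) = (n:ℤ) - s - 1 := by push_cast; omega
        have hi1 : 1 ≤ i := by omega
        have hi2 : i + 1 ≤ n := by omega
        -- upper windows agree up to d
        have hupper : ∀ k : ℤ, (i:ℤ) + 1 ≤ k → k ≤ (n:ℤ) → w'.toFun k = w.toFun k + d := by
          intro k hk1 hk2
          exact ih (by omega) k (by omega) hk2
        -- lowRes relation
        have him : lowRes w' i = (lowRes w i).image (· + (d : ZMod n)) := by
          rw [lowRes_eq_compl hn w' hi1 hi2, lowRes_eq_compl hn w hi1 hi2]
          have h1 : (Finset.Icc ((i:ℤ)+1) (n:ℤ)).image (fun j => (w'.toFun j : ZMod n))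
              = ((Finset.Icc ((i:ℤ)+1) (n:ℤ)).image (fun j => (w.toFun j : ZMod n))).image
                  (· + (d : ZMod n)) := by
            rw [Finset.image_image]
            apply Finset.image_congr
            intro k hk
            rw [Finset.mem_coe, Finset.mem_Icc] at hk
            simp only [Function.comp_apply]
            rw [hupper k hk.1 hk.2]
            push_cast
            ring
          have himuniv : Finset.univ.image (· + (d : ZMod n)) = (Finset.univ : Finset (ZMod n)) := by
            rw [show (· + (d : ZMod n)) = ⇑(Equiv.addRight (d : ZMod n)) from rfl]
            exact Finset.image_univ_equiv _
          rw [h1, Finset.image_sdiff _ _ (add_left_injective (d : ZMod n)), himuniv]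
        have hiter := window_eq_iterate hn w hM hi1 hi2
        have hiter' := window_eq_iterate hn w' hM' hi1 hi2
        have hgi : w'.gapVec i = w.gapVec i := (hg i hi1 (by omega)).symm
        have hw1 : w'.toFun ((i:ℤ)+1) = w.toFun ((i:ℤ)+1) + d :=
          hupper ((i:ℤ)+1) (by omega) (by omega)
        rw [hgi, him, hw1, prevInt_iterate_add hn (lowRes_nonempty w hi1)] at hiter'
        rw [← hiter] at hiter'
        rw [hji, ← hiz]
        exact hiter'
  have hall : ∀ j : ℤ, 1 ≤ j → j ≤ (n:ℤ) → w'.toFun j = w.toFun j + d := by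
    intro j hj1 hj2
    exact key (n-1) le_rfl j (by push_cast; omega) hj2
  have hcard : (Finset.Icc (1:ℤ) (n:ℤ)).card = n := by
    rw [Int.card_Icc]; omega
  have hsum : ∑ i ∈ Finset.Icc (1:ℤ) (n:ℤ), w'.toFun i
      = (∑ i ∈ Finset.Icc (1:ℤ) (n:ℤ), w.toFun i) + (n:ℤ) * d := by
    have e1 : ∑ i ∈ Finset.Icc (1:ℤ) (n:ℤ), w'.toFun i
        = ∑ i ∈ Finset.Icc (1:ℤ) (n:ℤ), (w.toFun i + d) := by
      refine Finset.sum_congr rfl (fun j hj => ?_)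
      rw [Finset.mem_Icc] at hj
      exact hall j hj.1 hj.2
    rw [e1, Finset.sum_add_distrib, Finset.sum_const, hcard, nsmul_eq_mul]
  have hs1 := w.sum_base
  have hs2 := w'.sum_base
  rw [hsum] at hs2
  have hd0 : d = 0 := by
    have hnz : (n:ℤ) ≠ 0 := by positivity
    have : (n:ℤ) * d = 0 := by linarith
    exact (mul_eq_zero.mp this).resolve_left hnz
  apply affinePerm_ext
  funext x
  obtain ⟨j, q, hj1, hj2, hx⟩ : ∃ j q : ℤ, 1 ≤ j ∧ j ≤ (n:ℤ) ∧ x = j + q * n := by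
    refine ⟨(x-1) % n + 1, (x-1) / n, ?_, ?_, ?_⟩
    · have := Int.emod_nonneg (x-1) (by positivity : (n:ℤ) ≠ 0)
      omega
    · have := Int.emod_lt_of_pos (x-1) (by exact_mod_cast hn : (0:ℤ) < n)
      omega
    · have := Int.mul_ediv_add_emod (x-1) n
      linarith
  subst hx
  rw [shift_int w j q, shift_int w' j q, hall j hj1 hj2, hd0]
  ring

/-! ### extending a window to an affine permutation -/

lemma exists_decomp (hn : 0 < n) (x : ℤ) : ∃ j q : ℤ, 1 ≤ j ∧ j ≤ (n:ℤ) ∧ x = j + q * n := by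
  refine ⟨(x-1) % n + 1, (x-1) / n, ?_, ?_, ?_⟩
  · have := Int.emod_nonneg (x-1) (by positivity : (n:ℤ) ≠ 0)
    omega
  · have := Int.emod_lt_of_pos (x-1) (by exact_mod_cast hn : (0:ℤ) < n)
    omega
  · have := Int.mul_ediv_add_emod (x-1) n
    linarith

def extFun (n : ℕ) (V : ℤ → ℤ) (x : ℤ) : ℤ := V (1 + (x-1) % n) + n * ((x-1) / n)

lemma extFun_eq (V : ℤ → ℤ) {j : ℤ} (h1 : 1 ≤ j) (h2 : j ≤ (n:ℤ)) : extFun n V j = V j := by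
  have hn : 0 < n := by have := le_trans h1 h2; omega
  have e1 : (j-1) % n = j - 1 := Int.emod_eq_of_lt (by omega) (by omega)
  have e2 : (j-1) / n = 0 := Int.ediv_eq_zero_of_lt (by omega) (by omega)
  rw [extFun, e1, e2, show 1 + (j-1) = j from by ring]
  ring

lemma extFun_decomp (hn : 0 < n) (V : ℤ → ℤ) {j : ℤ} (q : ℤ) (h1 : 1 ≤ j) (h2 : j ≤ (n:ℤ)) :
    extFun n V (j + q * n) = V j + q * n := by
  have hnz : (n:ℤ) ≠ 0 := by positivity
  have e0 : j + q * (n:ℤ) - 1 = (j-1) + (n:ℤ) * q := by ring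
  have e1 : (j + q * (n:ℤ) - 1) % n = j - 1 := by
    rw [e0, Int.add_mul_emod_self_left, Int.emod_eq_of_lt (by omega) (by omega)]
  have e2 : (j + q * (n:ℤ) - 1) / n = q := by
    rw [e0, Int.add_mul_ediv_left _ _ hnz, Int.ediv_eq_zero_of_lt (by omega) (by omega)]
    ring
  rw [extFun, e1, e2, show 1 + (j-1) = j from by ring]
  ring

lemma extFun_res {V : ℤ → ℤ} (hn : 0 < n) {j : ℤ} (q : ℤ) (h1 : 1 ≤ j) (h2 : j ≤ (n:ℤ)) :
    ((extFun n V (j + q * n) : ℤ) : ZMod n) = ((V j : ℤ) : ZMod n) := by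
  rw [extFun_decomp hn V q h1 h2]
  push_cast
  simp [ZMod.natCast_self]

lemma extFun_bijective (hn : 0 < n) {V : ℤ → ℤ}
    (hinj : ∀ j k : ℤ, 1 ≤ j → j ≤ n → 1 ≤ k → k ≤ n →
      ((V j : ℤ) : ZMod n) = ((V k : ℤ) : ZMod n) → j = k) :
    Function.Bijective (extFun n V) := by
  constructor
  · intro x y hxy
    obtain ⟨jx, qx, hjx1, hjx2, rfl⟩ := exists_decomp hn x
    obtain ⟨jy, qy, hjy1, hjy2, rfl⟩ := exists_decomp hn y
    have hres : ((V jx : ℤ) : ZMod n) = ((V jy : ℤ) : ZMod n) := by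
      rw [← extFun_res hn qx hjx1 hjx2, ← extFun_res hn qy hjy1 hjy2, hxy]
    have hj : jx = jy := hinj jx jy hjx1 hjx2 hjy1 hjy2 hres
    subst hj
    rw [extFun_decomp hn V qx hjx1 hjx2, extFun_decomp hn V qy hjx1 hjx2] at hxy
    have hnz : (0:ℤ) < n := by exact_mod_cast hn
    have : qx = qy := by
      have h := sub_eq_zero.mpr hxy
      have h2 : (qx - qy) * (n:ℤ) = 0 := by linarith [h]
      rcases mul_eq_zero.mp h2 with h3 | h3
      · omega
      · omega
    subst this
    rfl
  · intro y
    obtain ⟨j, hj1, hj2, hjr⟩ := res_cover' hn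
      (F := fun j => ((V j : ℤ) : ZMod n)) hinj ((y : ℤ) : ZMod n)
    have hdvd : (n:ℤ) ∣ y - V j := Int.ModEq.dvd ((ZMod.intCast_eq_intCast_iff _ _ _).mp hjr.symm).symm
    obtain ⟨q, hq⟩ := hdvd
    refine ⟨j + q * n, ?_⟩
    rw [extFun_decomp hn V q hj1 hj2]
    linarith [hq]

/-- package a window into an affine permutation. -/
noncomputable def windowPerm (hn : 0 < n) (V : ℤ → ℤ)
    (hinj : ∀ j k : ℤ, 1 ≤ j → j ≤ n → 1 ≤ k → k ≤ n →
      ((V j : ℤ) : ZMod n) = ((V k : ℤ) : ZMod n) → j = k)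
    (hsum : 2 * ∑ i ∈ Finset.Icc (1:ℤ) (n:ℤ), V i = n * (n + 1)) : AffinePerm n where
  toFun := extFun n V
  bijective := extFun_bijective hn hinj
  shift := by
    intro x
    have hnz : (n:ℤ) ≠ 0 := by positivity
    rw [extFun, extFun]
    have e0 : x + (n:ℤ) - 1 = (x-1) + (n:ℤ) * 1 := by ring
    rw [e0, Int.add_mul_emod_self_left, Int.add_mul_ediv_left _ _ hnz]
    ring
  sum_base := by
    have e1 : ∑ i ∈ Finset.Icc (1:ℤ) (n:ℤ), extFun n V i
        = ∑ i ∈ Finset.Icc (1:ℤ) (n:ℤ), V i :=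
      Finset.sum_congr rfl (fun j hj => by
        rw [Finset.mem_Icc] at hj
        exact extFun_eq V hj.1 hj.2)
    rw [e1]
    exact hsum

lemma windowPerm_toFun (hn : 0 < n) (V : ℤ → ℤ) (hinj) (hsum) {j : ℤ} (h1 : 1 ≤ j) (h2 : j ≤ (n:ℤ)) :
    (windowPerm hn V hinj hsum).toFun j = V j := extFun_eq V h1 h2

lemma windowPerm_mlcr (hn : 0 < n) (V : ℤ → ℤ) (hinj) (hsum)
    (hmono : ∀ j : ℤ, 1 ≤ j → j < (n:ℤ) → V j < V (j+1)) :
    (windowPerm hn V hinj hsum).IsMLCR := by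
  intro i h1 h2
  rw [windowPerm_toFun hn V hinj hsum h1 (by omega),
    windowPerm_toFun hn V hinj hsum (by omega) (by omega)]
  exact hmono i h1 h2

/-! ### construction of a window from a prescribed gap vector -/

variable (n) in
/-- build the window top-down: `(buildSt G T t).1` is the `(n-t)`-th window entry,
`(buildSt G T t).2` the set of residues not yet used. -/
noncomputable def buildSt [NeZero n] (G : ℕ → ℕ) (T : ℤ) : ℕ → ℤ × Finset (ZMod n)
  | 0 => (T, Finset.univ \ {(T : ZMod n)})
  | (t+1) =>
      let s := buildSt G T t
      let y := (prevInt n s.2)^[G (n-1-t) + 1] s.1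
      (y, s.2 \ {(y : ZMod n)})

section Build
variable [NeZero n] (G : ℕ → ℕ) (T : ℤ)

lemma buildSt_card : ∀ t : ℕ, t ≤ n - 1 → ((buildSt n G T t).2).card = n - 1 - t := by
  have hn : 0 < n := Nat.pos_of_ne_zero (NeZero.ne n)
  intro t
  induction t with
  | zero =>
    intro _
    rw [buildSt]
    rw [Finset.card_sdiff_of_subset (Finset.singleton_subset_iff.mpr (Finset.mem_univ _))]
    simp [ZMod.card]
  | succ t ih =>
    intro ht
    have hc := ih (by omega)
    have hne : ((buildSt n G T t).2).Nonempty := by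
      rw [← Finset.card_pos, hc]; omega
    have hmem : (((prevInt n (buildSt n G T t).2)^[G (n-1-t) + 1] (buildSt n G T t).1 : ℤ)
        : ZMod n) ∈ (buildSt n G T t).2 :=
      prevInt_iterate_mem hn hne _ (by omega)
    rw [buildSt]
    simp only []
    rw [Finset.card_sdiff_of_subset (Finset.singleton_subset_iff.mpr hmem), hc, Finset.card_singleton]
    omega

lemma buildSt_lt {t : ℕ} (ht : t + 1 ≤ n - 1) :
    (buildSt n G T (t+1)).1 < (buildSt n G T t).1 := by
  have hn : 0 < n := Nat.pos_of_ne_zero (NeZero.ne n)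
  have hne : ((buildSt n G T t).2).Nonempty := by
    rw [← Finset.card_pos, buildSt_card G T t (by omega)]; omega
  rw [buildSt]
  exact prevInt_iterate_lt hn hne _ (by omega)

lemma buildSt_strict : ∀ u t : ℕ, u < t → t ≤ n - 1 →
    (buildSt n G T t).1 < (buildSt n G T u).1 := by
  intro u t
  induction t with
  | zero => omega
  | succ t ih =>
    intro hu ht
    rcases Nat.lt_or_ge u t with h | h
    · exact lt_trans (buildSt_lt G T ht) (ih h (by omega))
    · have : u = t := by omega
      subst this
      exact buildSt_lt G T ht

lemma buildSt_pending : ∀ t : ℕ, t ≤ n - 1 →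
    (buildSt n G T t).2 = Finset.univ \ ((Finset.range (t+1)).image
      (fun u => ((buildSt n G T u).1 : ZMod n))) := by
  intro t
  induction t with
  | zero =>
    intro _
    have h1 : (Finset.range 1).image (fun u => ((buildSt n G T u).1 : ZMod n))
        = {(T : ZMod n)} := by
      simp [buildSt]
    show Finset.univ \ {(T : ZMod n)} = _
    rw [h1]
  | succ t ih =>
    intro ht
    have hpend := ih (by omega)
    have hS : (buildSt n G T (t+1)).2
        = (buildSt n G T t).2 \ {((buildSt n G T (t+1)).1 : ZMod n)} := by
      rfl
    rw [hS, hpend]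
    ext r
    simp only [Finset.mem_sdiff, Finset.mem_univ, true_and, Finset.mem_image,
      Finset.mem_range, Finset.mem_singleton]
    constructor
    · rintro ⟨hnot, hne⟩
      rintro ⟨u, hu, he⟩
      rcases Nat.lt_or_ge u (t+1) with h | h
      · exact hnot ⟨u, h, he⟩
      · have : u = t + 1 := by omega
        subst this
        exact hne he.symm
    · intro hnot
      refine ⟨?_, ?_⟩
      · rintro ⟨u, hu, he⟩
        exact hnot ⟨u, by omega, he⟩
      · intro he
        exact hnot ⟨t+1, by omega, he.symm⟩

lemma buildSt_mem {t : ℕ} (ht : t + 1 ≤ n - 1) :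
    (((buildSt n G T (t+1)).1 : ℤ) : ZMod n) ∈ (buildSt n G T t).2 := by
  have hn : 0 < n := Nat.pos_of_ne_zero (NeZero.ne n)
  have hne : ((buildSt n G T t).2).Nonempty := by
    rw [← Finset.card_pos, buildSt_card G T t (by omega)]; omega
  exact prevInt_iterate_mem hn hne _ (by omega)

lemma buildSt_res_ne : ∀ u t : ℕ, u < t → t ≤ n - 1 →
    ((buildSt n G T t).1 : ZMod n) ≠ ((buildSt n G T u).1 : ZMod n) := by
  intro u t hu ht
  obtain ⟨s, rfl⟩ : ∃ s, t = s + 1 := ⟨t - 1, by omega⟩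
  have hmem := buildSt_mem G T (show s + 1 ≤ n - 1 from ht)
  rw [buildSt_pending G T s (by omega)] at hmem
  rw [Finset.mem_sdiff] at hmem
  intro he
  exact hmem.2 (Finset.mem_image.mpr ⟨u, Finset.mem_range.mpr (by omega), he.symm⟩)

lemma buildSt_equiv (d : ℤ) : ∀ t : ℕ, t ≤ n - 1 →
    (buildSt n G (T+d) t).1 = (buildSt n G T t).1 + d ∧
    (buildSt n G (T+d) t).2 = ((buildSt n G T t).2).image (· + (d : ZMod n)) := by
  have hn : 0 < n := Nat.pos_of_ne_zero (NeZero.ne n)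
  have himuniv : Finset.univ.image (· + (d : ZMod n)) = (Finset.univ : Finset (ZMod n)) := by
    rw [show (· + (d : ZMod n)) = ⇑(Equiv.addRight (d : ZMod n)) from rfl]
    exact Finset.image_univ_equiv _
  intro t
  induction t with
  | zero =>
    intro _
    constructor
    · rfl
    · show Finset.univ \ {((T+d : ℤ) : ZMod n)}
          = (Finset.univ \ {(T : ZMod n)}).image (· + (d : ZMod n))
      rw [Finset.image_sdiff _ _ (add_left_injective (d : ZMod n)), himuniv,
        Finset.image_singleton]
      congr 2
      push_cast
      rfl
  | succ t ih =>
    intro ht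
    obtain ⟨ih1, ih2⟩ := ih (by omega)
    have hne : ((buildSt n G T t).2).Nonempty := by
      rw [← Finset.card_pos, buildSt_card G T t (by omega)]; omega
    have hy : (buildSt n G (T+d) (t+1)).1
        = (prevInt n (buildSt n G (T+d) t).2)^[G (n-1-t) + 1] (buildSt n G (T+d) t).1 := rfl
    have hy' : (buildSt n G (T+d) (t+1)).1 = (buildSt n G T (t+1)).1 + d := by
      rw [hy, ih1, ih2, prevInt_iterate_add hn hne]
      rfl
    refine ⟨hy', ?_⟩
    show (buildSt n G (T+d) t).2 \ {((buildSt n G (T+d) (t+1)).1 : ZMod n)} = _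
    rw [ih2, hy']
    have : (((buildSt n G T (t+1)).1 + d : ℤ) : ZMod n)
        = ((buildSt n G T (t+1)).1 : ZMod n) + (d : ZMod n) := by push_cast; rfl
    rw [this, ← Finset.image_singleton (· + (d : ZMod n)),
      ← Finset.image_sdiff _ _ (add_left_injective (d : ZMod n))]
    rfl

end Build

section Win
variable [NeZero n] (G : ℕ → ℕ) (T : ℤ)

variable (n) in
/-- the window function `{1,…,n} → ℤ` obtained from the construction. -/
noncomputable def winV (j : ℤ) : ℤ := (buildSt n G T (n - j.toNat)).1

lemma winV_res_inj : ∀ j k : ℤ, 1 ≤ j → j ≤ n → 1 ≤ k → k ≤ n →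
    ((winV n G T j : ℤ) : ZMod n) = ((winV n G T k : ℤ) : ZMod n) → j = k := by
  intro j k hj1 hjn hk1 hkn h
  by_contra hne
  have hn : 0 < n := Nat.pos_of_ne_zero (NeZero.ne n)
  set u := n - j.toNat with hu
  set t := n - k.toNat with htd
  have hut : u ≠ t := by omega
  rw [winV, winV, ← hu, ← htd] at h
  rcases Nat.lt_or_ge u t with hc | hc
  · exact buildSt_res_ne G T u t hc (by omega) h.symm
  · exact buildSt_res_ne G T t u (by omega) (by omega) h

lemma winV_mono : ∀ j : ℤ, 1 ≤ j → j < (n:ℤ) → winV n G T j < winV n G T (j+1) := by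
  intro j hj1 hjn
  have hn : 0 < n := Nat.pos_of_ne_zero (NeZero.ne n)
  rw [winV, winV]
  have e : n - (j+1).toNat < n - j.toNat := by omega
  exact buildSt_strict G T _ _ e (by omega)

lemma winV_shiftT (d : ℤ) {j : ℤ} (hj1 : 1 ≤ j) (hjn : j ≤ (n:ℤ)) :
    winV n G (T+d) j = winV n G T j + d := by
  rw [winV, winV]
  exact (buildSt_equiv G T d (n - j.toNat) (by omega)).1

end Win

lemma int_res_inj [NeZero n] : ∀ j k : ℤ, 1 ≤ j → j ≤ n → 1 ≤ k → k ≤ n →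
    ((j : ℤ) : ZMod n) = ((k : ℤ) : ZMod n) → j = k := by
  intro j k hj1 hjn hk1 hkn h
  have hdvd : (n:ℤ) ∣ j - k := Int.ModEq.dvd ((ZMod.intCast_eq_intCast_iff _ _ _).mp h).symm
  obtain ⟨q, hq⟩ := hdvd
  rw [mul_comm] at hq
  have hq0 : q * (n:ℤ) = 0 := by
    rcases lt_trichotomy q 0 with hs | hs | hs
    · have : q * (n:ℤ) ≤ (-1) * n := mul_le_mul_of_nonneg_right (by omega) (by omega)
      omega
    · simp [hs]
    · have : (1:ℤ) * n ≤ q * n := mul_le_mul_of_nonneg_right (by omega) (by omega)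
      omega
  omega

lemma sum_res_univ (hn : 0 < n) [NeZero n] {F : ℤ → ZMod n}
    (hinj : ∀ j k : ℤ, 1 ≤ j → j ≤ n → 1 ≤ k → k ≤ n → F j = F k → j = k) :
    ∑ j ∈ Finset.Icc (1:ℤ) (n:ℤ), F j = ∑ r ∈ Finset.univ, r := by
  rw [← res_image_univ' hn hinj, Finset.sum_image (fun x hx y hy hxy => by
    rw [Finset.mem_coe, Finset.mem_Icc] at hx hy
    exact hinj x y hx.1 hx.2 hy.1 hy.2 hxy)]

lemma gauss_sum : ∀ m : ℕ, 2 * ∑ j ∈ Finset.Icc (1:ℤ) (m:ℤ), j = m * (m+1) := by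
  intro m
  induction m with
  | zero => simp
  | succ p ih =>
    have hsplit : Finset.Icc (1:ℤ) ((p+1:ℕ):ℤ)
        = insert ((p:ℤ)+1) (Finset.Icc (1:ℤ) (p:ℤ)) := by
      ext x
      simp only [Finset.mem_Icc, Finset.mem_insert]
      push_cast
      omega
    have hnot : ((p:ℤ)+1) ∉ Finset.Icc (1:ℤ) (p:ℤ) := by
      simp only [Finset.mem_Icc]
      omega
    rw [hsplit, Finset.sum_insert hnot]
    push_cast
    ring_nf
    ring_nf at ih
    omega


lemma gapvec_surjective (hn2 : 2 ≤ n) (g : Fin (n-1) → ℕ) :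
    ∃ w : AffinePerm n, w.IsMLCR ∧ ∀ i : Fin (n-1), w.gapVec (i.1+1) = g i := by
  have hn : 0 < n := by omega
  haveI : NeZero n := ⟨by omega⟩
  classical
  set G : ℕ → ℕ := fun i => if h : 1 ≤ i ∧ i ≤ n - 1 then g ⟨i-1, by omega⟩ else 0 with hG
  set M : ℤ := ∑ j ∈ Finset.Icc (1:ℤ) (n:ℤ), j with hM
  set S0 : ℤ := ∑ j ∈ Finset.Icc (1:ℤ) (n:ℤ), winV n G 0 j with hS0
  have hinj0 := winV_res_inj (n := n) G 0
  have hdvd : (n:ℤ) ∣ M - S0 := by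
    have h1 : ((M - S0 : ℤ) : ZMod n) = 0 := by
      push_cast [hM, hS0]
      rw [sum_res_univ hn (int_res_inj (n := n)),
        sum_res_univ hn (F := fun j => ((winV n G 0 j : ℤ) : ZMod n)) hinj0]
      ring
    exact (ZMod.intCast_zmod_eq_zero_iff_dvd _ _).mp h1
  set T : ℤ := (M - S0) / n with hT
  have hnT : (n:ℤ) * T = M - S0 := Int.mul_ediv_cancel' hdvd
  have hcard : (Finset.Icc (1:ℤ) (n:ℤ)).card = n := by
    rw [Int.card_Icc]; omega
  have hsum : 2 * ∑ j ∈ Finset.Icc (1:ℤ) (n:ℤ), winV n G T j = n * (n + 1) := by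
    have e1 : ∑ j ∈ Finset.Icc (1:ℤ) (n:ℤ), winV n G T j
        = ∑ j ∈ Finset.Icc (1:ℤ) (n:ℤ), (winV n G 0 j + T) := by
      refine Finset.sum_congr rfl (fun j hj => ?_)
      rw [Finset.mem_Icc] at hj
      have := winV_shiftT (n := n) G 0 T hj.1 hj.2
      rwa [zero_add] at this
    rw [e1, Finset.sum_add_distrib, Finset.sum_const, hcard, nsmul_eq_mul, ← hS0]
    have := gauss_sum n
    rw [← hM] at this
    omega
  set w := windowPerm hn (winV n G T) (winV_res_inj G T) hsum with hw
  have hml : w.IsMLCR := windowPerm_mlcr hn (winV n G T) _ _ (winV_mono G T)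
  have hwj : ∀ j : ℤ, 1 ≤ j → j ≤ (n:ℤ) → w.toFun j = winV n G T j := fun j h1 h2 =>
    windowPerm_toFun hn (winV n G T) _ _ h1 h2
  refine ⟨w, hml, ?_⟩
  intro i
  set iN : ℕ := i.1 + 1 with hiN
  have hi1 : 1 ≤ iN := by omega
  have hi2 : iN + 1 ≤ n := by
    have := i.2
    omega
  set t0 : ℕ := n - 1 - iN with ht0d
  have ht0 : t0 ≤ n - 1 := by omega
  have hpend := buildSt_pending (n := n) G T t0 ht0
  have hlow : lowRes w iN = (buildSt n G T t0).2 := by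
    rw [lowRes_eq_compl hn w hi1 hi2, hpend]
    congr 1
    ext r
    simp only [Finset.mem_image, Finset.mem_Icc, Finset.mem_range]
    constructor
    · rintro ⟨k, ⟨hk1, hk2⟩, he⟩
      refine ⟨n - k.toNat, by omega, ?_⟩
      rw [hwj k (by omega) hk2] at he
      exact he
    · rintro ⟨u, hu, he⟩
      refine ⟨((n - u : ℕ) : ℤ), ⟨by push_cast; omega, by push_cast; omega⟩, ?_⟩
      rw [hwj _ (by push_cast; omega) (by push_cast; omega)]
      show ((buildSt n G T (n - (((n - u : ℕ) : ℤ)).toNat)).1 : ZMod n) = r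
      rw [show ((((n - u : ℕ) : ℤ)).toNat) = n - u from by omega,
        show n - (n - u) = u from by omega]
      exact he
  have hiter : winV n G T (iN:ℤ) = (prevInt n ((buildSt n G T t0).2))^[G iN + 1]
      (winV n G T ((iN:ℤ)+1)) := by
    have e1 : n - ((iN:ℤ)).toNat = t0 + 1 := by omega
    have e2 : n - (((iN:ℤ)+1)).toNat = t0 := by omega
    rw [winV, winV, e1, e2]
    show (buildSt n G T (t0+1)).1 = _
    rw [show (buildSt n G T (t0+1)).1
      = (prevInt n ((buildSt n G T t0).2))^[G (n-1-t0) + 1] (buildSt n G T t0).1 from rfl]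
    rw [show n-1-t0 = iN from by omega]
  have hne : ((buildSt n G T t0).2).Nonempty := by
    rw [← Finset.card_pos, buildSt_card G T t0 ht0]
    omega
  have hcount := count_iterate hn hne (G iN) (winV n G T ((iN:ℤ)+1))
  have hgv := gapVec_eq_card hn w hml hi1 hi2
  rw [hlow, hwj (iN:ℤ) (by omega) (by push_cast; omega),
    hwj ((iN:ℤ)+1) (by omega) (by push_cast; omega), hiter, hcount] at hgv
  rw [hgv, hG]
  simp only []
  rw [dif_pos ⟨hi1, by omega⟩]
  congr 1

end GapBij

/-- the gap vector map is a bijection `S̃ₙ^∘ → ℕ^{n-1}`. -/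
theorem stmt3 (n : ℕ) (hn : 2 ≤ n) :
    Function.Bijective (fun w : {w : AffinePerm n // w.IsMLCR} =>
      fun i : Fin (n - 1) => w.1.gapVec (i.1 + 1)) := by
  constructor
  · rintro ⟨w, hw⟩ ⟨w', hw'⟩ h
    simp only at h
    apply Subtype.ext
    apply GapBij.gapvec_injective hn hw hw'
    intro i hi1 hi2
    have := congrFun h ⟨i - 1, by omega⟩
    simpa [show i - 1 + 1 = i from by omega] using this
  · intro g
    obtain ⟨w, hml, hgv⟩ := GapBij.gapvec_surjective hn g
    exact ⟨⟨w, hml⟩, funext fun i => hgv i⟩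
end

section
/- For every integer n ≥ 2, the number of minimal elements of S̃_n^∘ is exactly (n−1)!. -/
open scoped BigOperators

namespace Stmt5Aux

open Finset

lemma eq_zero_of_dvd_small {m a : ℤ} (h : m ∣ a) (h1 : |a| < m) : a = 0 := by
  by_contra ha
  have h2 : (0:ℤ) < |a| := abs_pos.mpr ha
  have := Int.le_of_dvd h2 ((dvd_abs m a).mpr h)
  omega

variable {n : ℕ}

lemma AffinePerm.ext' {w w' : AffinePerm n} (h : w.toFun = w'.toFun) : w = w' := by
  cases w; cases w'; simp_all

lemma shift_mul (w : AffinePerm n) (i : ℤ) (k : ℤ) :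
    w.toFun (i + k * n) = w.toFun i + k * n := by
  induction k using Int.induction_on with
  | zero => simp
  | succ k ih =>
    have h := w.shift (i + k * n)
    have e : i + ((k : ℤ) + 1) * n = i + k * n + n := by ring
    rw [e, h, ih]; ring
  | pred k ih =>
    have h := w.shift (i + (-(k:ℤ) - 1) * n)
    have e : i + (-(k:ℤ) - 1) * n + n = i + (-(k:ℤ)) * n := by ring
    rw [e, ih] at h
    have : w.toFun (i + (-(k:ℤ) - 1) * n) = w.toFun i + (-(k:ℤ)) * n - n := by omega
    rw [this]; ring

/-- residues of window values are distinct -/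
lemma res_inj (w : AffinePerm n) (hn : 2 ≤ n) {i j : ℤ} (hi1 : 1 ≤ i) (hi2 : i ≤ n)
    (hj1 : 1 ≤ j) (hj2 : j ≤ n) (h : (n:ℤ) ∣ w.toFun i - w.toFun j) : i = j := by
  obtain ⟨k, hk⟩ := h
  have hc : k * (n:ℤ) = (n:ℤ) * k := mul_comm _ _
  have : w.toFun (j + k * n) = w.toFun i := by rw [shift_mul]; omega
  have hij : j + k * n = i := w.bijective.injective this
  have hd : (n:ℤ) ∣ i - j := ⟨k, by omega⟩
  have := eq_zero_of_dvd_small hd (by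
    have : (2:ℤ) ≤ n := by exact_mod_cast hn
    rw [abs_lt]; omega)
  omega

lemma window_values (w : AffinePerm n) (i : ℤ) :
    w.toFun i = w.toFun ((i - 1) % n + 1) + ((i - 1) / n) * n := by
  have h := shift_mul w ((i - 1) % n + 1) ((i - 1) / n)
  have hc : (i-1) / n * (n:ℤ) = (n:ℤ) * ((i-1)/n) := mul_comm _ _
  have e : (i - 1) % n + 1 + (i - 1) / n * n = i := by
    have := Int.emod_add_mul_ediv (i - 1) n
    omega
  rw [e] at h; omega

section g

variable [NeZero n] (g : Fin n → ZMod n)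

/-- difference sequence from residue sequence -/
noncomputable def Dg (j : ℕ) : ℤ :=
  if h : 1 ≤ j ∧ j < n then ((g ⟨j, h.2⟩ - g ⟨j - 1, by omega⟩).val : ℤ) else 0

/-- partial sums -/
noncomputable def Sg (r : ℕ) : ℤ := ∑ j ∈ Finset.Icc 1 r, Dg g j

/-- base offset -/
noncomputable def cg : ℤ :=
  (((n * (n + 1) / 2 : ℕ) : ℤ) - ∑ r ∈ Finset.range n, Sg g r) / n

/-- the affine permutation function -/
noncomputable def wg (i : ℤ) : ℤ :=
  cg g + Sg g ((i - 1) % n).toNat + n * ((i - 1) / n)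

lemma Sg_zero : Sg g 0 = 0 := by simp [Sg]

lemma Sg_succ (r : ℕ) : Sg g (r + 1) = Sg g r + Dg g (r + 1) :=
  Finset.sum_Icc_succ_top (by omega) _

lemma Dg_bounds (hginj : Function.Injective g) {j : ℕ} (h1 : 1 ≤ j) (h2 : j < n) :
    1 ≤ Dg g j ∧ Dg g j ≤ (n:ℤ) - 1 := by
  rw [Dg, dif_pos ⟨h1, h2⟩]
  set x := g ⟨j, h2⟩ - g ⟨j - 1, by omega⟩ with hx
  have hne : x ≠ 0 := by
    rw [hx, sub_ne_zero]
    intro he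
    have := hginj he
    simp only [Fin.mk.injEq] at this
    omega
  have h3 : x.val < n := ZMod.val_lt x
  have h4 : x.val ≠ 0 := fun hz => hne ((ZMod.val_eq_zero x).mp hz)
  omega

lemma Sg_cast (hg0 : g 0 = 0) {r : ℕ} (hr : r < n) : ((Sg g r : ℤ) : ZMod n) = g ⟨r, hr⟩ := by
  induction r with
  | zero =>
    rw [Sg_zero]
    have h0 : (⟨0, hr⟩ : Fin n) = 0 := by apply Fin.ext; simp
    rw [h0, hg0]; push_cast; rfl
  | succ r ih =>
    rw [Sg_succ, Dg, dif_pos ⟨by omega, hr⟩]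
    push_cast
    rw [ih (by omega)]
    have hc : ((((g ⟨r+1, hr⟩ - g ⟨r+1-1, by omega⟩).val : ℕ)) : ZMod n)
        = g ⟨r+1, hr⟩ - g ⟨r+1-1, by omega⟩ := ZMod.natCast_rightInverse _
    push_cast at hc
    rw [hc]
    ring

lemma sum_zmod_univ : ∑ x : ZMod n, x = ((n * (n - 1) / 2 : ℕ) : ZMod n) := by
  have h1 : ∑ x : ZMod n, x = ∑ i ∈ Finset.range n, ((i : ℕ) : ZMod n) := by
    refine Finset.sum_nbij' (fun x => x.val) (fun i => ((i : ℕ) : ZMod n)) ?_ ?_ ?_ ?_ ?_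
    · intro a _; exact Finset.mem_range.mpr (ZMod.val_lt a)
    · intro a _; exact Finset.mem_univ _
    · intro a _; exact ZMod.natCast_rightInverse a
    · intro a ha; exact ZMod.val_cast_of_lt (Finset.mem_range.mp ha)
    · intro a _; exact (ZMod.natCast_rightInverse a).symm
  rw [h1, ← Nat.cast_sum, Finset.sum_range_id]

lemma dvd_key (hn : 2 ≤ n) (hg0 : g 0 = 0) (hginj : Function.Injective g) :
    (n:ℤ) ∣ (((n * (n + 1) / 2 : ℕ) : ℤ) - ∑ r ∈ Finset.range n, Sg g r) := by
  rw [← ZMod.intCast_zmod_eq_zero_iff_dvd]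
  simp only [Int.cast_sub, Int.cast_natCast, Int.cast_sum]
  have h1 : ∑ r ∈ Finset.range n, ((Sg g r : ℤ) : ZMod n) = ∑ x : ZMod n, x := by
    calc ∑ r ∈ Finset.range n, ((Sg g r : ℤ) : ZMod n)
        = ∑ i : Fin n, g i := by
          rw [Finset.sum_range fun r => ((Sg g r : ℤ) : ZMod n)]
          exact Finset.sum_congr rfl fun i _ => Sg_cast g hg0 i.2
      _ = ∑ x : ZMod n, x := by
          exact Function.Bijective.sum_comp
            ((Fintype.bijective_iff_injective_and_card g).mpr
              ⟨hginj, by simp [ZMod.card]⟩) id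
  rw [h1, sum_zmod_univ]
  have e2 : n * (n + 1) / 2 = n * (n - 1) / 2 + n := by
    have d1 : 2 ∣ n * (n + 1) := (Nat.even_mul_succ_self n).two_dvd
    have d2 : 2 ∣ n * (n - 1) := by
      rcases Nat.even_or_odd n with h | h
      · exact Dvd.dvd.mul_right h.two_dvd _
      · refine Dvd.dvd.mul_left ?_ _
        have : Even (n - 1) := by
          rcases h with ⟨k, hk⟩; exact ⟨k, by omega⟩
        exact this.two_dvd
    obtain ⟨a, ha⟩ := d1; obtain ⟨b, hb⟩ := d2
    have : n * (n + 1) = n * (n - 1) + 2 * n := by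
      have h2 : 1 ≤ n := by omega
      nlinarith [Nat.sub_add_cancel h2]
    omega
  rw [e2, Nat.cast_add, ZMod.natCast_self, add_zero, sub_self]

lemma cg_spec (hn : 2 ≤ n) (hg0 : g 0 = 0) (hginj : Function.Injective g) :
    (n:ℤ) * cg g =
    ((n * (n + 1) / 2 : ℕ) : ℤ) - ∑ r ∈ Finset.range n, Sg g r :=
  Int.mul_ediv_cancel' (dvd_key g hn hg0 hginj)

lemma wg_window {i : ℤ} (h1 : 1 ≤ i) (h2 : i ≤ n) :
    wg g i = cg g + Sg g (i - 1).toNat := by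
  have hn0 : (0:ℤ) < n := by have := NeZero.pos n; exact_mod_cast this
  rw [wg, Int.emod_eq_of_lt (by omega) (by omega), Int.ediv_eq_zero_of_lt (by omega) (by omega)]
  ring

lemma wg_shift (i : ℤ) : wg g (i + n) = wg g i + n := by
  have hn0 : (n:ℤ) ≠ 0 := by have := NeZero.pos n; intro h; omega
  have e1 : i + (n:ℤ) - 1 = (i - 1) + (n:ℤ) * 1 := by ring
  rw [wg, wg, e1, Int.add_mul_emod_self_left]
  have e2 : (i - 1) + (n:ℤ) * 1 = (i - 1) + 1 * n := by ring
  rw [e2, Int.add_mul_ediv_right _ _ hn0]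
  ring

lemma wg_inj (hg0 : g 0 = 0) (hginj : Function.Injective g) :
    Function.Injective (wg g) := by
  intro i i' h
  have hn0 : (0:ℤ) < n := by have := NeZero.pos n; exact_mod_cast this
  rw [wg, wg] at h
  set r := ((i - 1) % n).toNat with hr
  set r' := ((i' - 1) % n).toNat with hr'
  have hrb : (r : ℤ) = (i - 1) % n ∧ (r:ℤ) < n := by
    constructor
    · exact Int.toNat_of_nonneg (Int.emod_nonneg _ (by omega))
    · have := Int.emod_lt_of_pos (i - 1) hn0
      have h2 := Int.toNat_of_nonneg (Int.emod_nonneg (i-1) (show (n:ℤ) ≠ 0 by omega))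
      omega
  have hrb' : (r' : ℤ) = (i' - 1) % n ∧ (r':ℤ) < n := by
    constructor
    · exact Int.toNat_of_nonneg (Int.emod_nonneg _ (by omega))
    · have := Int.emod_lt_of_pos (i' - 1) hn0
      have h2 := Int.toNat_of_nonneg (Int.emod_nonneg (i'-1) (show (n:ℤ) ≠ 0 by omega))
      omega
  have hcast : ((Sg g r : ℤ) : ZMod n) = ((Sg g r' : ℤ) : ZMod n) := by
    have hd : (n:ℤ) ∣ Sg g r' - Sg g r := by
      refine ⟨(i - 1) / n - (i' - 1) / n, ?_⟩
      have h5 : cg g + Sg g r + (n:ℤ) * ((i-1)/n) = cg g + Sg g r' + (n:ℤ) * ((i'-1)/n) := h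
      have e : (n:ℤ) * ((i - 1) / n - (i' - 1) / n)
          = (n:ℤ) * ((i-1)/n) - (n:ℤ) * ((i'-1)/n) := by ring
      omega
    exact ((ZMod.intCast_eq_intCast_iff _ _ _).mpr
      (Int.ModEq.symm (Int.modEq_iff_dvd.mpr hd))).symm
  rw [Sg_cast g hg0 (by exact_mod_cast hrb.2), Sg_cast g hg0 (by exact_mod_cast hrb'.2)] at hcast
  have hrr : r = r' := by
    have := hginj hcast
    simpa using this
  have hq : (i - 1) / n = (i' - 1) / n := by
    rw [hrr] at h
    have h5 : cg g + Sg g r' + (n:ℤ) * ((i-1)/n) = cg g + Sg g r' + (n:ℤ) * ((i'-1)/n) := h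
    have h6 : (n:ℤ) * ((i-1)/n) = (n:ℤ) * ((i'-1)/n) := by omega
    exact mul_left_cancel₀ (by omega) h6
  have e1 := Int.emod_add_mul_ediv (i - 1) n
  have e2 := Int.emod_add_mul_ediv (i' - 1) n
  have hc1 : (n:ℤ) * ((i-1)/n) = (n:ℤ) * ((i'-1)/n) := by rw [hq]
  omega

lemma wg_surj (hg0 : g 0 = 0) (hginj : Function.Injective g) :
    Function.Surjective (wg g) := by
  intro m
  have hn0 : (0:ℤ) < n := by have := NeZero.pos n; exact_mod_cast this
  have hbij : Function.Bijective g := (Fintype.bijective_iff_injective_and_card g).mpr ⟨hginj, by simp [ZMod.card]⟩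
  obtain ⟨j, hj⟩ := hbij.2 (((m - cg g : ℤ) : ZMod n))
  have hdvd : (n:ℤ) ∣ (m - cg g - Sg g j.1) := by
    rw [← ZMod.intCast_zmod_eq_zero_iff_dvd]
    push_cast
    rw [Sg_cast g hg0 j.2]
    rw [Fin.eta, hj]
    push_cast
    ring
  obtain ⟨q, hq⟩ := hdvd
  refine ⟨(j.1 : ℤ) + 1 + n * q, ?_⟩
  have e1 : (j.1 : ℤ) + 1 + n * q - 1 = (j.1 : ℤ) + (n:ℤ) * q := by ring
  have hjlt : (j.1 : ℤ) < n := by exact_mod_cast j.2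
  rw [wg, e1, Int.add_mul_emod_self_left, Int.emod_eq_of_lt (by omega) hjlt]
  have e2 : (j.1:ℤ) + (n:ℤ)*q = (j.1:ℤ) + q * n := by ring
  rw [e2, Int.add_mul_ediv_right _ _ (show (n:ℤ) ≠ 0 by omega),
    Int.ediv_eq_zero_of_lt (by omega) hjlt, Int.toNat_natCast]
  have e3 : (0:ℤ) + q = q := by ring
  rw [e3]
  omega

lemma wg_sum (hn : 2 ≤ n) (hg0 : g 0 = 0) (hginj : Function.Injective g) :
    2 * ∑ i ∈ Finset.Icc (1:ℤ) (n:ℤ), wg g i = n * (n + 1) := by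
  have hn0 : (0:ℤ) < n := by omega
  have h1 : ∑ i ∈ Finset.Icc (1:ℤ) (n:ℤ), wg g i
      = ∑ r ∈ Finset.range n, (cg g + Sg g r) := by
    refine Finset.sum_nbij' (fun i => (i - 1).toNat) (fun r => (r:ℤ) + 1) ?_ ?_ ?_ ?_ ?_
    · intro a ha
      rw [Finset.mem_Icc] at ha
      rw [Finset.mem_range]
      omega
    · intro a ha
      rw [Finset.mem_range] at ha
      rw [Finset.mem_Icc]
      omega
    · intro a ha; rw [Finset.mem_Icc] at ha; omega
    · intro a ha; rw [Finset.mem_range] at ha; omega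
    · intro a ha
      rw [Finset.mem_Icc] at ha
      rw [wg_window g ha.1 ha.2]
  rw [h1, Finset.sum_add_distrib, Finset.sum_const, Finset.card_range, nsmul_eq_mul]
  have h2 := cg_spec g hn hg0 hginj
  have h4 : 2 * ((n * (n + 1) / 2 : ℕ) : ℤ) = (n:ℤ) * ((n:ℤ)+1) := by
    have d1 : 2 ∣ n * (n + 1) := (Nat.even_mul_succ_self n).two_dvd
    obtain ⟨a, ha⟩ := d1
    have : (n:ℤ) * ((n:ℤ)+1) = 2 * (a:ℤ) := by exact_mod_cast congrArg (Nat.cast : ℕ → ℤ) ha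
    rw [this]
    have : n * (n+1) / 2 = a := by omega
    rw [this]
  omega

/-- the constructed affine permutation -/
noncomputable def wgPerm (hn : 2 ≤ n) (hg0 : g 0 = 0) (hginj : Function.Injective g) :
    AffinePerm n where
  toFun := wg g
  bijective := ⟨wg_inj g hg0 hginj, wg_surj g hg0 hginj⟩
  shift := wg_shift g
  sum_base := wg_sum g hn hg0 hginj

lemma wgPerm_diff (hn : 2 ≤ n) (hg0 : g 0 = 0) (hginj : Function.Injective g)
    {j : ℤ} (h1 : 1 ≤ j) (h2 : j ≤ (n:ℤ) - 1) :
    (wgPerm g hn hg0 hginj).toFun (j + 1) - (wgPerm g hn hg0 hginj).toFun j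
      = Dg g (j.toNat) := by
  have hn0 : (0:ℤ) < n := by omega
  show wg g (j+1) - wg g j = _
  rw [wg_window g (by omega) (by omega), wg_window g (by omega) (by omega)]
  have e1 : (j + 1 - 1).toNat = (j - 1).toNat + 1 := by omega
  rw [e1, Sg_succ]
  have e2 : (j - 1).toNat + 1 = j.toNat := by omega
  rw [e2]
  ring

end g

section Phi

variable [NeZero n]

/-- residue data of an affine permutation -/
noncomputable def Phi (hn : 2 ≤ n) (w : AffinePerm n) : Fin (n - 1) ↪ {x : ZMod n // x ≠ 0} where
  toFun := fun j => ⟨((w.toFun (((j:ℕ):ℤ) + 2) - w.toFun 1 : ℤ) : ZMod n), by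
    intro h0
    have hd : (n:ℤ) ∣ (w.toFun (((j:ℕ):ℤ)+2) - w.toFun 1) :=
      (ZMod.intCast_zmod_eq_zero_iff_dvd _ _).mp h0
    have hj : (j:ℕ) < n - 1 := j.2
    have := res_inj w hn (i := ((j:ℕ):ℤ)+2) (j := 1) (by omega) (by omega) (by omega)
      (by omega) hd
    omega⟩
  inj' := by
    intro a b h
    rw [Subtype.mk.injEq] at h
    have hd : (n:ℤ) ∣ (w.toFun (((a:ℕ):ℤ)+2) - w.toFun (((b:ℕ):ℤ)+2)) := by
      rw [← ZMod.intCast_zmod_eq_zero_iff_dvd]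
      have : ((w.toFun (((a:ℕ):ℤ)+2) - w.toFun (((b:ℕ):ℤ)+2) : ℤ) : ZMod n)
          = ((w.toFun (((a:ℕ):ℤ) + 2) - w.toFun 1 : ℤ) : ZMod n)
            - ((w.toFun (((b:ℕ):ℤ) + 2) - w.toFun 1 : ℤ) : ZMod n) := by
        push_cast; ring
      rw [this, h, sub_self]
    have ha : (a:ℕ) < n - 1 := a.2
    have hb : (b:ℕ) < n - 1 := b.2
    have := res_inj w hn (i := ((a:ℕ):ℤ)+2) (j := ((b:ℕ):ℤ)+2) (by omega) (by omega)
      (by omega) (by omega) hd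
    exact Fin.ext (by omega)

lemma Phi_inj (hn : 2 ≤ n) {w w' : AffinePerm n} (hw : w.IsMinimal) (hw' : w'.IsMinimal)
    (h : Phi hn w = Phi hn w') : w = w' := by
  have hres : ∀ j : ℕ, (hj : j < n - 1) →
      ((w.toFun ((j:ℤ)+2) - w.toFun 1 : ℤ) : ZMod n)
        = ((w'.toFun ((j:ℤ)+2) - w'.toFun 1 : ℤ) : ZMod n) := by
    intro j hj
    have := DFunLike.congr_fun h ⟨j, hj⟩
    simpa [Phi, Subtype.ext_iff] using this
  have hE : ∀ i : ℤ, 1 ≤ i → i ≤ n →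
      ((w.toFun i - w.toFun 1 : ℤ) : ZMod n) = ((w'.toFun i - w'.toFun 1 : ℤ) : ZMod n) := by
    intro i hi1 hi2
    rcases eq_or_lt_of_le hi1 with he | hlt
    · rw [← he]; simp
    · have hj : ((i - 2).toNat : ℤ) + 2 = i := by omega
      have hjlt : (i - 2).toNat < n - 1 := by omega
      have := hres (i-2).toNat hjlt
      rw [hj] at this
      exact this
  have hstep : ∀ j : ℤ, 1 ≤ j → j ≤ (n:ℤ) - 1 →
      w.toFun (j+1) - w.toFun j = w'.toFun (j+1) - w'.toFun j := by
    intro j h1 h2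
    obtain ⟨hd1, hd2⟩ := hw j h1 h2
    obtain ⟨hd1', hd2'⟩ := hw' j h1 h2
    have hc : ((w.toFun (j+1) - w.toFun j : ℤ) : ZMod n)
        = ((w'.toFun (j+1) - w'.toFun j : ℤ) : ZMod n) := by
      have e1 : ((w.toFun (j+1) - w.toFun j : ℤ) : ZMod n)
          = ((w.toFun (j+1) - w.toFun 1 : ℤ) : ZMod n)
            - ((w.toFun j - w.toFun 1 : ℤ) : ZMod n) := by push_cast; ring
      have e2 : ((w'.toFun (j+1) - w'.toFun j : ℤ) : ZMod n)
          = ((w'.toFun (j+1) - w'.toFun 1 : ℤ) : ZMod n)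
            - ((w'.toFun j - w'.toFun 1 : ℤ) : ZMod n) := by push_cast; ring
      rw [e1, e2, hE (j+1) (by omega) (by omega), hE j (by omega) (by omega)]
    have hdvd : (n:ℤ) ∣ ((w.toFun (j+1) - w.toFun j) - (w'.toFun (j+1) - w'.toFun j)) := by
      rw [← ZMod.intCast_zmod_eq_zero_iff_dvd]
      push_cast
      push_cast at hc
      rw [hc]
      ring
    have := eq_zero_of_dvd_small hdvd (by rw [abs_lt]; omega)
    omega
  have hwinN : ∀ m : ℕ, (m:ℤ) + 1 ≤ n →
      w.toFun ((m:ℤ)+1) - w.toFun 1 = w'.toFun ((m:ℤ)+1) - w'.toFun 1 := by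
    intro m
    induction m with
    | zero => intro _; simp
    | succ m ih =>
      intro hm
      have e : ((m:ℤ) + 1) + 1 = ((m+1 : ℕ):ℤ) + 1 := by push_cast; ring
      have hs := hstep ((m:ℤ)+1) (by omega) (by push_cast at hm; omega)
      rw [e] at hs
      have := ih (by push_cast at hm ⊢; omega)
      omega
  have hwin : ∀ j : ℤ, 1 ≤ j → j ≤ n →
      w.toFun j - w.toFun 1 = w'.toFun j - w'.toFun 1 := by
    intro j h1 h2
    have e : ((j - 1).toNat : ℤ) + 1 = j := by omega
    have := hwinN (j-1).toNat (by omega)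
    rw [e] at this
    exact this
  have hbase : w.toFun 1 = w'.toFun 1 := by
    set c := w.toFun 1 - w'.toFun 1 with hc
    have hsum : ∑ i ∈ Finset.Icc (1:ℤ) (n:ℤ), w.toFun i
        = ∑ i ∈ Finset.Icc (1:ℤ) (n:ℤ), (w'.toFun i + c) := by
      refine Finset.sum_congr rfl ?_
      intro i hi
      rw [Finset.mem_Icc] at hi
      have := hwin i hi.1 hi.2
      omega
    rw [Finset.sum_add_distrib, Finset.sum_const] at hsum
    have hcard : (Finset.Icc (1:ℤ) (n:ℤ)).card = n := by
      rw [Int.card_Icc]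
      omega
    rw [hcard, nsmul_eq_mul] at hsum
    have h1 := w.sum_base
    have h2 := w'.sum_base
    have hn0 : (0:ℤ) < n := by omega
    have : (n:ℤ) * c = 0 := by omega
    have := mul_eq_zero.mp this
    rcases this with h | h
    · omega
    · omega
  have hfun : w.toFun = w'.toFun := by
    funext i
    have hwv := window_values w i
    have hwv' := window_values w' i
    have hn0 : (0:ℤ) < n := by omega
    have hr1 : 1 ≤ (i - 1) % n + 1 := by
      have := Int.emod_nonneg (i-1) (show (n:ℤ) ≠ 0 by omega)
      omega
    have hr2 : (i - 1) % n + 1 ≤ (n:ℤ) := by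
      have := Int.emod_lt_of_pos (i-1) hn0
      omega
    have := hwin ((i-1) % n + 1) hr1 hr2
    omega
  exact AffinePerm.ext' hfun

/-- the permutation built from an embedding -/
noncomputable def gOf (f : Fin (n-1) ↪ {x : ZMod n // x ≠ 0}) : Fin n → ZMod n :=
  fun j => if h : j.1 = 0 then 0 else (f ⟨j.1 - 1, by have := j.2; omega⟩).1

lemma gOf_zero (f : Fin (n-1) ↪ {x : ZMod n // x ≠ 0}) : gOf f 0 = 0 := by
  simp [gOf]

lemma gOf_inj (f : Fin (n-1) ↪ {x : ZMod n // x ≠ 0}) : Function.Injective (gOf f) := by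
  intro a b hab
  rw [gOf, gOf] at hab
  by_cases ha : a.1 = 0 <;> by_cases hb : b.1 = 0
  · exact Fin.ext (by omega)
  · rw [dif_pos ha, dif_neg hb] at hab
    exact absurd hab.symm (f ⟨b.1 - 1, _⟩).2
  · rw [dif_neg ha, dif_pos hb] at hab
    exact absurd hab (f ⟨a.1 - 1, _⟩).2
  · rw [dif_neg ha, dif_neg hb] at hab
    have := f.injective (Subtype.ext hab)
    rw [Fin.mk.injEq] at this
    exact Fin.ext (by omega)

lemma gOf_succ (f : Fin (n-1) ↪ {x : ZMod n // x ≠ 0}) (j : ℕ) (hj : j < n - 1) :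
    gOf f ⟨j + 1, by omega⟩ = (f ⟨j, hj⟩).1 := by
  have h0 : ((⟨j + 1, by omega⟩ : Fin n) : ℕ) ≠ 0 := by simp
  rw [gOf, dif_neg h0]
  simp

end Phi

end Stmt5Aux

/-- there are exactly `(n-1)!` minimal elements of `S̃ₙ^∘`. -/
theorem stmt5 (n : ℕ) (hn : 2 ≤ n) :
    {w : AffinePerm n | w.IsMLCR ∧ w.IsMinimal}.ncard = (n - 1).factorial := by
  haveI : NeZero n := ⟨by omega⟩
  have hbij : Function.Bijective
      (fun x : {w : AffinePerm n // w.IsMLCR ∧ w.IsMinimal} => Stmt5Aux.Phi hn x.1) := by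
    constructor
    · intro x y hxy
      exact Subtype.ext (Stmt5Aux.Phi_inj hn x.2.2 y.2.2 hxy)
    · intro f
      set g := Stmt5Aux.gOf f with hg
      have hg0 := Stmt5Aux.gOf_zero f
      have hginj := Stmt5Aux.gOf_inj f
      set w := Stmt5Aux.wgPerm g hn hg0 hginj with hw
      have hdiff : ∀ j : ℤ, 1 ≤ j → j ≤ (n:ℤ) - 1 →
          1 ≤ w.toFun (j+1) - w.toFun j ∧ w.toFun (j+1) - w.toFun j ≤ (n:ℤ) - 1 := by
        intro j h1 h2
        rw [hw, Stmt5Aux.wgPerm_diff g hn hg0 hginj h1 h2]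
        exact Stmt5Aux.Dg_bounds g hginj (by omega) (by omega)
      have hMin : w.IsMinimal := fun j h1 h2 => hdiff j h1 h2
      have hMLCR : w.IsMLCR := by
        intro i h1 h2
        have := hdiff i h1 (by omega)
        omega
      refine ⟨⟨w, hMLCR, hMin⟩, ?_⟩
      apply Function.Embedding.ext
      intro j
      apply Subtype.ext
      show ((w.toFun (((j:ℕ):ℤ) + 2) - w.toFun 1 : ℤ) : ZMod n) = (f j).1
      have hj : (j:ℕ) < n - 1 := j.2
      have h1 : w.toFun (((j:ℕ):ℤ) + 2) = Stmt5Aux.cg g + Stmt5Aux.Sg g ((j:ℕ) + 1) := by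
        show Stmt5Aux.wg g _ = _
        rw [Stmt5Aux.wg_window g (by omega) (by omega)]
        congr 1
        congr 1
        omega
      have h2 : w.toFun 1 = Stmt5Aux.cg g := by
        show Stmt5Aux.wg g _ = _
        rw [Stmt5Aux.wg_window g (by omega) (by omega)]
        norm_num [Stmt5Aux.Sg_zero]
      rw [h1, h2]
      have e : Stmt5Aux.cg g + Stmt5Aux.Sg g ((j:ℕ) + 1) - Stmt5Aux.cg g
          = Stmt5Aux.Sg g ((j:ℕ) + 1) := by ring
      rw [e, Stmt5Aux.Sg_cast g hg0 (show (j:ℕ) + 1 < n by omega)]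
      rw [hg, Stmt5Aux.gOf_succ f (j:ℕ) hj]
  rw [← Nat.card_coe_set_eq]
  have e : Nat.card ↑{w : AffinePerm n | w.IsMLCR ∧ w.IsMinimal}
      = Nat.card (Fin (n-1) ↪ {x : ZMod n // x ≠ 0}) := Nat.card_eq_of_bijective _ hbij
  rw [e, Nat.card_eq_fintype_card, Fintype.card_embedding_eq, Fintype.card_fin]
  have hcard : Fintype.card {x : ZMod n // x ≠ 0} = n - 1 := by
    have h1 := Fintype.card_subtype_compl (fun x : ZMod n => x = 0)
    have h2 : Fintype.card {x : ZMod n // x = 0} = 1 := Fintype.card_subtype_eq 0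
    have h3 : Fintype.card (ZMod n) = n := ZMod.card n
    calc Fintype.card {x : ZMod n // x ≠ 0}
        = Fintype.card {x : ZMod n // ¬ x = 0} := rfl
      _ = n - 1 := by rw [h1, h2, h3]
  rw [hcard, Nat.descFactorial_self]
end
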